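/- arXiv:math/0106072 — 7 statements merged into one kernel-verified Lean document; each statement's English description precedes it below -/
import Mathlib

section
/- Let F be a field of characteristic 0, let V be an F-vector space with dim V = k, and let n be a positive integer with k² < n. Then the image under φ of the group algebra of the alternating group equals the image of the full group algebra: φ(F[Aₙ]) = φ(F[Sₙ]) as subalgebras of End_F(V^{⊗n}). -/
/-!
If a set `s` of more than `k = dim V` tensor positions carries only `k` basis values, two of those
positions carry the same value, so the transposition exchanging them fixes the basis tensor; hence
the even and the odd halves of the symmetrizer over `s` act identically on `V^{⊗n}`. Therefore `φ`
maps the two-sided ideal `J ⊆ F[Sₙ]` generated by these symmetrizers into the intersection of the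
spans of the even and of the odd permutation operators. Since `k² < n`, every basis tensor has one
value on more than `k` positions and is fixed by a rescaled symmetrizer lying in `J`. As `F[Sₙ]` is
semisimple, `J` has a left unit `u`, which must then act as the identity, and `φ σ = φ (σ u)` lies
in the span of the even permutations.
-/

open scoped TensorProduct

open Equiv Equiv.Perm Finset

theorem Equiv.Perm.sum_filter_sign_eq_eq_sum_filter_sign_ne {α M : Type*} [Fintype α]
    [DecidableEq α] [AddCommMonoid M] (f : Perm α → M) {a b : α} (hab : a ≠ b)
    (hf : ∀ τ, f (τ * swap a b) = f τ) (ε : ℤˣ) :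
    ∑ τ with sign τ = ε, f τ = ∑ τ with sign τ ≠ ε, f τ := by
  refine Finset.sum_equiv (Equiv.mulRight (swap a b)) (fun τ => ?_) (fun τ _ => (hf τ).symm)
  simp only [mem_filter, mem_univ, true_and, coe_mulRight, sign_mul, sign_swap hab, mul_neg,
    mul_one, Int.units_ne_iff_eq_neg, neg_inj]

theorem TwoSidedIdeal.exists_mul_left_eq_self {R : Type*} [Ring R] [IsSemisimpleRing R]
    (I : TwoSidedIdeal R) : ∃ u ∈ I, ∀ x ∈ I, u * x = x := by
  obtain ⟨e, he, hspan⟩ := IsSemisimpleRing.ideal_eq_span_idempotent I.asIdealOpposite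
  refine ⟨e.unop, mem_asIdealOpposite.mp (hspan ▸ Ideal.subset_span rfl), fun x hx => ?_⟩
  obtain ⟨r, hr⟩ := Submodule.mem_span_singleton.mp (hspan ▸ mem_asIdealOpposite.mpr hx :
    MulOpposite.op x ∈ Ideal.span {e})
  rw [← MulOpposite.unop_op x, ← hr, smul_eq_mul, ← MulOpposite.unop_mul, mul_assoc, he.eq]

noncomputable def symmetrizer (R : Type*) {ι : Type*} [Semiring R] [DecidableEq ι]
    (s : Finset ι) : MonoidAlgebra R (Perm ι) :=
  ∑ τ : Perm s, MonoidAlgebra.of R _ (ofSubtype τ)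

noncomputable def symmetrizerIdeal (R ι : Type*) [Ring R] [DecidableEq ι] (k : ℕ) :
    TwoSidedIdeal (MonoidAlgebra R (Perm ι)) :=
  TwoSidedIdeal.span {x | ∃ s : Finset ι, k < #s ∧ symmetrizer R s = x}

theorem Representation.asAlgebraHom_symmetrizer {F W ι : Type*} [Field F] [AddCommGroup W]
    [Module F W] [DecidableEq ι] (ρ : Representation F (Perm ι) W) (s : Finset ι) :
    ρ.asAlgebraHom (symmetrizer F s) = ∑ τ : Perm s, ρ (ofSubtype τ) := by
  simp [symmetrizer]

namespace Representation

section SignSpan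

variable {F α W : Type*} [Field F] [AddCommGroup W] [Module F W] [Fintype α] [DecidableEq α]
  (ρ : Representation F (Perm α) W)

def signSpan (ε : ℤˣ) : Submodule F (Module.End F W) :=
  Submodule.span F (ρ '' {σ | sign σ = ε})

variable {ρ}

theorem mul_mem_signSpan (g : Perm α) {ε : ℤˣ} {t : Module.End F W} (ht : t ∈ ρ.signSpan ε) :
    ρ g * t ∈ ρ.signSpan (sign g * ε) := by
  induction ht using Submodule.span_induction with
  | mem _ h =>
    obtain ⟨σ, rfl, rfl⟩ := h
    exact Submodule.subset_span ⟨g * σ, sign_mul g σ, map_mul ρ g σ⟩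
  | zero => simp
  | add _ _ _ _ hx hy => rw [mul_add]; exact add_mem hx hy
  | smul c _ _ hx => rw [mul_smul_comm]; exact Submodule.smul_mem _ c hx

theorem mem_signSpan_mul (g : Perm α) {ε : ℤˣ} {t : Module.End F W} (ht : t ∈ ρ.signSpan ε) :
    t * ρ g ∈ ρ.signSpan (ε * sign g) := by
  induction ht using Submodule.span_induction with
  | mem _ h =>
    obtain ⟨σ, rfl, rfl⟩ := h
    exact Submodule.subset_span ⟨σ * g, sign_mul σ g, map_mul ρ σ g⟩
  | zero => simp
  | add _ _ _ _ hx hy => rw [add_mul]; exact add_mem hx hy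
  | smul c _ _ hx => rw [smul_mul_assoc]; exact Submodule.smul_mem _ c hx

variable (ρ) in
def signBalanced : Submodule F (Module.End F W) := ⨅ ε, ρ.signSpan ε

theorem asAlgebraHom_mul_mem_signBalanced (a : MonoidAlgebra F (Perm α)) {t : Module.End F W}
    (ht : t ∈ ρ.signBalanced) : ρ.asAlgebraHom a * t ∈ ρ.signBalanced := by
  induction a using MonoidAlgebra.induction_on with
  | of g =>
    refine Submodule.mem_iInf _ |>.mpr fun ε => ?_
    have := mul_mem_signSpan g (Submodule.mem_iInf _ |>.mp ht (sign g * ε))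
    rwa [← mul_assoc, Int.units_mul_self, one_mul, ← asAlgebraHom_of] at this
  | add x y hx hy => rw [map_add, add_mul]; exact add_mem hx hy
  | smul c x hx => rw [map_smul, smul_mul_assoc]; exact Submodule.smul_mem _ c hx

theorem mul_asAlgebraHom_mem_signBalanced (a : MonoidAlgebra F (Perm α)) {t : Module.End F W}
    (ht : t ∈ ρ.signBalanced) : t * ρ.asAlgebraHom a ∈ ρ.signBalanced := by
  induction a using MonoidAlgebra.induction_on with
  | of g =>
    refine Submodule.mem_iInf _ |>.mpr fun ε => ?_
    have := mem_signSpan_mul g (Submodule.mem_iInf _ |>.mp ht (ε * sign g))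
    rwa [mul_assoc, Int.units_mul_self, mul_one, ← asAlgebraHom_of] at this
  | add x y hx hy => rw [map_add, mul_add]; exact add_mem hx hy
  | smul c x hx => rw [map_smul, mul_smul_comm]; exact Submodule.smul_mem _ c hx

variable (ρ) in
noncomputable def signBalancedIdeal : TwoSidedIdeal (MonoidAlgebra F (Perm α)) :=
  .mk' {x | ρ.asAlgebraHom x ∈ ρ.signBalanced} (by simp)
    (fun hx hy => by simpa using add_mem hx hy)
    (fun hx => by simpa using (neg_mem hx : -_ ∈ ρ.signBalanced))
    (fun hy => by simpa using asAlgebraHom_mul_mem_signBalanced _ hy)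
    (fun hx => by simpa using mul_asAlgebraHom_mem_signBalanced _ hx)

theorem mem_signBalancedIdeal {x : MonoidAlgebra F (Perm α)} :
    x ∈ ρ.signBalancedIdeal ↔ ∀ ε, ρ.asAlgebraHom x ∈ ρ.signSpan ε :=
  (TwoSidedIdeal.mem_mk' ..).trans (Submodule.mem_iInf _)

end SignSpan

variable {F V ι κ : Type*} [Field F] [AddCommGroup V] [Module F V] [Fintype ι]

def PermutesTensorFactors (ρ : Representation F (Perm ι) (⨂[F] _ : ι, V)) : Prop :=
  ∀ σ (v : ι → V), ρ σ (PiTensorProduct.tprod F v) = PiTensorProduct.tprod F fun i => v (σ⁻¹ i)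

namespace PermutesTensorFactors

variable {ρ : Representation F (Perm ι) (⨂[F] _ : ι, V)} (hρ : ρ.PermutesTensorFactors)
  (b : Module.Basis κ F V)
include hρ

theorem apply_basis_eq_self {σ : Perm ι} {j : ι → κ} (hj : ∀ i, j (σ i) = j i) :
    ρ σ (Basis.piTensorProduct (fun _ => b) j) =
      Basis.piTensorProduct (fun _ => b) j := by
  rw [Basis.piTensorProduct_apply, hρ]
  congr! 2 with i
  rw [← hj, ← Perm.mul_apply, mul_inv_cancel, Perm.one_apply]

theorem symmetrizer_mem_signBalancedIdeal [DecidableEq ι] [FiniteDimensional F V] {s : Finset ι}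
    (hs : Module.finrank F V < #s) : symmetrizer F s ∈ ρ.signBalancedIdeal := by
  refine mem_signBalancedIdeal.mpr fun ε => ?_
  have halves_eq : ∑ τ : Perm s with sign τ = ε, ρ (ofSubtype τ) =
      ∑ τ : Perm s with sign τ ≠ ε, ρ (ofSubtype τ) := by
    refine (Basis.piTensorProduct fun _ => Module.finBasis F V).ext fun j => ?_
    simp only [LinearMap.coe_sum, Finset.sum_apply]
    obtain ⟨p, q, hpq, hj⟩ := Fintype.exists_ne_map_eq_of_card_lt (fun p : s => j p) (by simpa)
    refine sum_filter_sign_eq_eq_sum_filter_sign_ne _ hpq (fun τ => ?_) ε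
    rw [map_mul, map_mul, Module.End.mul_apply, ofSubtype_swap_eq, apply_basis_eq_self hρ]
    intro i
    rw [swap_apply_def]
    split_ifs with h₁ h₂ <;> simp_all
  rw [asAlgebraHom_symmetrizer, ← sum_filter_add_sum_filter_not _ (sign · = ε), ← halves_eq]
  refine add_mem ?_ ?_ <;>
    exact sum_mem fun τ hτ => Submodule.subset_span ⟨_, by simpa using hτ, rfl⟩

theorem symmetrizerIdeal_le_signBalancedIdeal [DecidableEq ι] [FiniteDimensional F V] :
    symmetrizerIdeal F ι (Module.finrank F V) ≤ ρ.signBalancedIdeal :=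
  TwoSidedIdeal.span_le.mpr <| by
    rintro _ ⟨s, hs, rfl⟩
    exact symmetrizer_mem_signBalancedIdeal hρ hs

theorem asAlgebraHom_symmetrizer_apply_basis [DecidableEq ι] {s : Finset ι} {j : ι → κ} {c : κ}
    (hj : ∀ i ∈ s, j i = c) :
    ρ.asAlgebraHom (symmetrizer F s) (Basis.piTensorProduct (fun _ => b) j) =
      Fintype.card (Perm s) • Basis.piTensorProduct (fun _ => b) j := by
  rw [asAlgebraHom_symmetrizer, LinearMap.coe_sum, Finset.sum_apply, ← Finset.card_univ,
    ← sum_const]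
  refine sum_congr rfl fun τ _ => apply_basis_eq_self hρ b fun i => ?_
  by_cases hi : i ∈ s
  · rw [ofSubtype_apply_of_mem τ hi, hj _ (τ _).2, hj i hi]
  · rw [ofSubtype_apply_of_not_mem τ hi]

theorem exists_mem_symmetrizerIdeal_asAlgebraHom_eq_one [DecidableEq ι] [CharZero F]
    [FiniteDimensional F V] (h : Module.finrank F V ^ 2 < Fintype.card ι) :
    ∃ u ∈ symmetrizerIdeal F ι (Module.finrank F V), ρ.asAlgebraHom u = 1 := by
  set J := symmetrizerIdeal F ι (Module.finrank F V)
  obtain ⟨u, hu, hunit⟩ := J.exists_mul_left_eq_self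
  refine ⟨u, hu, ?_⟩
  let B := Basis.piTensorProduct fun _ : ι => Module.finBasis F V
  refine B.ext fun j => ?_
  obtain ⟨c, hc⟩ := Fintype.exists_lt_card_fiber_of_mul_lt_card j (by simpa [sq] using h)
  set s := ({i | j i = c} : Finset ι)
  let x := (Fintype.card (Perm s) : F)⁻¹ • symmetrizer F s
  have hx : x ∈ J := by
    simpa only [x, Algebra.smul_def] using
      J.mul_mem_left _ _ (TwoSidedIdeal.subset_span ⟨s, by simpa using hc, rfl⟩)
  have hxj : ρ.asAlgebraHom x (B j) = B j := by
    rw [map_smul, LinearMap.smul_apply,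
      asAlgebraHom_symmetrizer_apply_basis hρ _ (c := c) (by simp [s]),
      ← Nat.cast_smul_eq_nsmul F,
      inv_smul_smul₀ (Nat.cast_ne_zero.mpr Fintype.card_ne_zero)]
  calc ρ.asAlgebraHom u (B j) = ρ.asAlgebraHom (u * x) (B j) := by
        rw [map_mul, Module.End.mul_apply, hxj]
    _ = B j := by rw [hunit x hx, hxj]

theorem span_image_sign_eq_one_eq_span_range [DecidableEq ι] [CharZero F] [FiniteDimensional F V]
    (h : Module.finrank F V ^ 2 < Fintype.card ι) :
    Submodule.span F (ρ '' {σ | sign σ = 1}) = Submodule.span F (Set.range ρ) := by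
  obtain ⟨u, hu, hu1⟩ := exists_mem_symmetrizerIdeal_asAlgebraHom_eq_one hρ h
  refine le_antisymm (Submodule.span_mono (Set.image_subset_range _ _)) ?_
  rw [Submodule.span_le]
  rintro _ ⟨σ, rfl⟩
  have hσu := symmetrizerIdeal_le_signBalancedIdeal hρ (TwoSidedIdeal.mul_mem_left _
    (MonoidAlgebra.of F _ σ) _ hu)
  have := mem_signBalancedIdeal.mp hσu 1
  rwa [map_mul, hu1, mul_one, asAlgebraHom_of] at this

end PermutesTensorFactors

end Representation

theorem stmt0_general (F : Type*) [Field F] [CharZero F]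
    (V : Type*) [AddCommGroup V] [Module F V] [FiniteDimensional F V]
    (k n : ℕ) (hk : Module.finrank F V = k) (hkn : k ^ 2 < n)
    (φ : Representation F (Equiv.Perm (Fin n)) (⨂[F] _ : Fin n, V))
    (hφ : ∀ (σ : Equiv.Perm (Fin n)) (v : Fin n → V),
      φ σ (PiTensorProduct.tprod F v) = PiTensorProduct.tprod F (fun i => v (σ⁻¹ i))) :
    Submodule.span F (⇑φ '' ((alternatingGroup (Fin n) : Subgroup (Equiv.Perm (Fin n))) : Set (Equiv.Perm (Fin n)))) =
      Submodule.span F (Set.range ⇑φ) :=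
  Representation.PermutesTensorFactors.span_image_sign_eq_one_eq_span_range hφ
    (by simpa [hk] using hkn)

/-- Let `F` be a field of characteristic `0`, `V` an `F`-vector space of
dimension `k`, and `n` a positive integer with `k² < n`.  Let `φ` be the (sign-free)
permutation action of the symmetric group `Sₙ` on the `n`-fold tensor power `V^{⊗n}`,
`φ_σ(v₁ ⊗ ⋯ ⊗ vₙ) = v_{σ⁻¹(1)} ⊗ ⋯ ⊗ v_{σ⁻¹(n)}`.  Then the image of the group algebra
`F[Aₙ]` of the alternating group (i.e. the `F`-linear span of `{φ_σ : σ ∈ Aₙ}`) equals the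
image of the full group algebra `F[Sₙ]` (the span of `{φ_σ : σ ∈ Sₙ}`) inside
`End_F(V^{⊗n})`. -/
theorem stmt0 (F : Type*) [Field F] [CharZero F]
    (V : Type*) [AddCommGroup V] [Module F V] [FiniteDimensional F V]
    (k n : ℕ) (hk : Module.finrank F V = k) (hn : 0 < n) (hkn : k ^ 2 < n)
    (φ : Representation F (Equiv.Perm (Fin n)) (⨂[F] _ : Fin n, V))
    (hφ : ∀ (σ : Equiv.Perm (Fin n)) (v : Fin n → V),
      φ σ (PiTensorProduct.tprod F v) = PiTensorProduct.tprod F (fun i => v (σ⁻¹ i))) :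
    Submodule.span F (⇑φ '' ((alternatingGroup (Fin n) : Subgroup (Equiv.Perm (Fin n))) : Set (Equiv.Perm (Fin n)))) =
      Submodule.span F (Set.range ⇑φ) :=
  stmt0_general F V k n hk hkn φ hφ
end

section
/- Let F be a field of characteristic 0, let V be an F-vector space with dim V = k, and let n be a positive integer with k² < n. Then End_{F[Aₙ]}(V^{⊗n}) = End_{F[Sₙ]}(V^{⊗n}): every F-linear endomorphism of V^{⊗n} that commutes with φ_σ for all even permutations σ ∈ Aₙ commutes with φ_σ for all σ ∈ Sₙ. -/
open scoped TensorProduct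

/-!
Let `L` commute with the even permutations and let `τ` be odd. Then `K := τ⁻¹ L τ - L`
anticommutes with every odd permutation, in particular with every transposition. Any operator
on `V^{⊗n}` anticommuting with all transpositions vanishes once `(dim V)² < n`: for basis
tensors `e_f` and coordinates `g`, pigeonhole gives `i ≠ j` with `(f i, g i) = (f j, g j)`, and
the swap of `i, j` fixes both `e_f` and the `g`-th coordinate, so that coordinate of `K e_f`
equals its own negative. From `K = 0` one reads off that `L` commutes with `τ`.
-/

open Equiv

section Alternating

variable {α R : Type*} [Fintype α] [DecidableEq α] [Ring R] {ρ : Perm α →* R} {L : R}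

theorem conj_sub_mul_of_sign_eq_neg_one (hL : ∀ σ ∈ alternatingGroup α, Commute L (ρ σ))
    {τ σ : Perm α} (hτ : Perm.sign τ = -1) (hσ : Perm.sign σ = -1) :
    (ρ τ⁻¹ * L * ρ τ - L) * ρ σ = ρ σ * L - L * ρ σ := by
  have h : Commute L (ρ (τ * σ)) := hL _ (by simp [Perm.mem_alternatingGroup, hτ, hσ])
  calc (ρ τ⁻¹ * L * ρ τ - L) * ρ σ = ρ τ⁻¹ * (L * ρ (τ * σ)) - L * ρ σ := by
        simp only [map_mul, sub_mul, mul_assoc]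
    _ = ρ σ * L - L * ρ σ := by rw [h.eq, ← mul_assoc, ← map_mul, inv_mul_cancel_left]

theorem mul_conj_sub_of_sign_eq_neg_one (hL : ∀ σ ∈ alternatingGroup α, Commute L (ρ σ))
    {τ σ : Perm α} (hτ : Perm.sign τ = -1) (hσ : Perm.sign σ = -1) :
    ρ σ * (ρ τ⁻¹ * L * ρ τ - L) = L * ρ σ - ρ σ * L := by
  have h : Commute L (ρ (σ * τ⁻¹)) := hL _ (by simp [Perm.mem_alternatingGroup, hτ, hσ])
  calc ρ σ * (ρ τ⁻¹ * L * ρ τ - L) = ρ (σ * τ⁻¹) * L * ρ τ - ρ σ * L := by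
        simp only [map_mul, mul_sub, mul_assoc]
    _ = L * ρ σ - ρ σ * L := by rw [← h.eq, mul_assoc, ← map_mul, inv_mul_cancel_right]

end Alternating

section TensorPower

variable {F V ι κ : Type*} [Field F] [AddCommGroup V] [Module F V] [Fintype ι]
  {φ : Perm ι → Module.End F (⨂[F] _ : ι, V)}

theorem Basis.piTensorProduct_repr_perm (b : Module.Basis κ F V)
    (hφ : ∀ σ (v : ι → V), φ σ (PiTensorProduct.tprod F v) =
      PiTensorProduct.tprod F fun i => v (σ⁻¹ i))
    (σ : Perm ι) (x : ⨂[F] _ : ι, V) (g : ι → κ) :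
    (Basis.piTensorProduct fun _ => b).repr (φ σ x) g =
      (Basis.piTensorProduct fun _ => b).repr x (g ∘ σ) := by
  let B := Basis.piTensorProduct fun _ : ι => b
  suffices B.coord g ∘ₗ φ σ = B.coord (g ∘ σ) from LinearMap.congr_fun this x
  refine PiTensorProduct.ext (MultilinearMap.ext fun v => ?_)
  simp only [LinearMap.compMultilinearMap_apply, LinearMap.comp_apply, Module.Basis.coord_apply,
    hφ, B, Basis.piTensorProduct_repr_tprod_apply, Function.comp_apply]
  exact Fintype.prod_equiv σ⁻¹ _ _ fun i => by simp

theorem PiTensorProduct.eq_zero_of_swap_anticommute [DecidableEq ι] [NeZero (2 : F)]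
    [FiniteDimensional F V]
    (hdim : Module.finrank F V ^ 2 < Fintype.card ι)
    (hφ : ∀ σ (v : ι → V), φ σ (PiTensorProduct.tprod F v) =
      PiTensorProduct.tprod F fun i => v (σ⁻¹ i))
    {K : Module.End F (⨂[F] _ : ι, V)}
    (hK : ∀ i j, i ≠ j → K * φ (swap i j) = -(φ (swap i j) * K)) : K = 0 := by
  let b := Module.finBasis F V
  let B := Basis.piTensorProduct fun _ : ι => b
  refine B.ext fun f => B.ext_elem fun g => ?_
  obtain ⟨i, j, hij, hfg⟩ := Fintype.exists_ne_map_eq_of_card_lt (fun i => (f i, g i))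
    (by simpa [sq] using hdim)
  have hf : ∀ l, f (swap i j l) = f l := apply_swap_eq_self (congrArg Prod.fst hfg)
  have hg : g ∘ swap i j = g := funext (apply_swap_eq_self (congrArg Prod.snd hfg))
  have hfix : φ (swap i j) (B f) = B f := by
    simp only [B, Basis.piTensorProduct_apply, hφ, swap_inv, hf]
  have hneg : B.repr (K (B f)) g = -B.repr (K (B f)) g := by
    conv_lhs => rw [← hfix, ← Module.End.mul_apply, hK i j hij]
    rw [LinearMap.neg_apply, map_neg, Finsupp.neg_apply, Module.End.mul_apply,
      Basis.piTensorProduct_repr_perm b hφ, hg]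
  have htwo : (2 : F) * B.repr (K (B f)) g = 0 := by linear_combination hneg
  simpa using (mul_eq_zero.mp htwo).resolve_left two_ne_zero

end TensorPower

theorem stmt1_general (F : Type*) [Field F] [CharZero F]
    (V : Type*) [AddCommGroup V] [Module F V] [FiniteDimensional F V]
    (k n : ℕ) (hk : Module.finrank F V = k) (hkn : k ^ 2 < n)
    (φ : Representation F (Equiv.Perm (Fin n)) (⨂[F] _ : Fin n, V))
    (hφ : ∀ (σ : Equiv.Perm (Fin n)) (v : Fin n → V),
      φ σ (PiTensorProduct.tprod F v) = PiTensorProduct.tprod F (fun i => v (σ⁻¹ i))) :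
    {L : (⨂[F] _ : Fin n, V) →ₗ[F] (⨂[F] _ : Fin n, V) |
        ∀ σ ∈ alternatingGroup (Fin n), L ∘ₗ φ σ = φ σ ∘ₗ L} =
      {L : (⨂[F] _ : Fin n, V) →ₗ[F] (⨂[F] _ : Fin n, V) |
        ∀ σ : Equiv.Perm (Fin n), L ∘ₗ φ σ = φ σ ∘ₗ L} := by
  ext L
  refine ⟨fun hL σ => ?_, fun hL σ _ => hL σ⟩
  rcases Int.units_eq_one_or (Perm.sign σ) with hσ | hσ
  · exact hL σ hσ
  have hK : φ σ⁻¹ * L * φ σ - L = 0 := by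
    refine PiTensorProduct.eq_zero_of_swap_anticommute (by simpa [hk] using hkn) hφ
      fun i j hij => ?_
    have hs := Perm.sign_swap hij
    rw [conj_sub_mul_of_sign_eq_neg_one hL hσ hs, mul_conj_sub_of_sign_eq_neg_one hL hσ hs,
      neg_sub]
  have h := conj_sub_mul_of_sign_eq_neg_one hL hσ hσ
  rw [hK, zero_mul, eq_comm, sub_eq_zero] at h
  exact h.symm

/-- Let `F` be a field of characteristic `0`, `V` an `F`-vector space of
dimension `k`, and `n` a positive integer with `k² < n`.  Let `φ` be the (sign-free)
permutation action of `Sₙ` on `V^{⊗n}`.  Then the centralizer algebras coincide: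
`End_{F[Aₙ]}(V^{⊗n}) = End_{F[Sₙ]}(V^{⊗n})`, i.e. every `F`-linear endomorphism of
`V^{⊗n}` commuting with `φ_σ` for all even permutations `σ` commutes with `φ_σ`
for all `σ ∈ Sₙ`. -/
theorem stmt1 (F : Type*) [Field F] [CharZero F]
    (V : Type*) [AddCommGroup V] [Module F V] [FiniteDimensional F V]
    (k n : ℕ) (hk : Module.finrank F V = k) (hn : 0 < n) (hkn : k ^ 2 < n)
    (φ : Representation F (Equiv.Perm (Fin n)) (⨂[F] _ : Fin n, V))
    (hφ : ∀ (σ : Equiv.Perm (Fin n)) (v : Fin n → V),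
      φ σ (PiTensorProduct.tprod F v) = PiTensorProduct.tprod F (fun i => v (σ⁻¹ i))) :
    {L : (⨂[F] _ : Fin n, V) →ₗ[F] (⨂[F] _ : Fin n, V) |
        ∀ σ ∈ alternatingGroup (Fin n), L ∘ₗ φ σ = φ σ ∘ₗ L} =
      {L : (⨂[F] _ : Fin n, V) →ₗ[F] (⨂[F] _ : Fin n, V) |
        ∀ σ : Equiv.Perm (Fin n), L ∘ₗ φ σ = φ σ ∘ₗ L} :=
  stmt1_general F V k n hk hkn φ hφ
end

section
/- Let F be a field with char F ≠ 2, n ≥ 2, ρ a linear representation of Sₙ on an F-vector space W, and T an invertible F-linear endomorphism of W satisfying ρ_σ ∘ T = sgn(σ)·(T ∘ ρ_σ) for all σ ∈ Sₙ, and T² = ε·id_W where ε ∈ {1, −1}. Let s ∈ F satisfy s² = ε, and define ω : End_{Sₙ}(W) → End_{Sₙ}(W) by ω(b) = ε·T∘b∘T. Then the map ζ : End_{Sₙ}(W) × End_{Sₙ}(W) → End_{Aₙ}(W) given by ζ(b₁, b₂) = b₁ + s·(b₂∘T) is a bijective F-linear map satisfying ζ(b₁,b₂) ∘ ζ(c₁,c₂)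 = ζ(b₁∘c₁ + b₂∘ω(c₂), b₁∘c₂ + b₂∘ω(c₁)) for all b₁,b₂,c₁,c₂ ∈ End_{Sₙ}(W); that is, End_{Aₙ}(W) is isomorphic as an F-algebra to the crossed product of End_{Sₙ}(W) with the order-two group {1, ω}. -/
/-- **The crossed product theorem.** Let `F` be a field with `char F ≠ 2`,
`n ≥ 2`, `ρ` a representation of `Sₙ` on an `F`-vector space `W`, and `T` an invertible
`F`-linear endomorphism of `W` with `ρ_σ ∘ T = sgn(σ) • (T ∘ ρ_σ)` for all `σ` and
`T² = ε • id`, where `ε ∈ {1, -1}`.  Let `s ∈ F` with `s² = ε`, and let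
`ω(b) = ε • (T ∘ b ∘ T)`.  Then the map `ζ(b₁, b₂) = b₁ + s • (b₂ ∘ T)` is an `F`-linear
bijection from `End_{Sₙ}(W) × End_{Sₙ}(W)` onto `End_{Aₙ}(W)` satisfying
`ζ(b₁,b₂) ∘ ζ(c₁,c₂) = ζ(b₁∘c₁ + b₂∘ω(c₂), b₁∘c₂ + b₂∘ω(c₁))`; that is, `End_{Aₙ}(W)` is
isomorphic as an `F`-algebra to the crossed product of `End_{Sₙ}(W)` with the order-two
group `{1, ω}`. -/
theorem stmt2 (F : Type*) [Field F] (h2 : (2 : F) ≠ 0) (n : ℕ) (hn : 2 ≤ n)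
    (W : Type*) [AddCommGroup W] [Module F W]
    (ρ : Representation F (Equiv.Perm (Fin n)) W)
    (T : W →ₗ[F] W) (hTbij : Function.Bijective T)
    (hT : ∀ σ : Equiv.Perm (Fin n),
      ρ σ ∘ₗ T = ((Equiv.Perm.sign σ : ℤ) : F) • (T ∘ₗ ρ σ))
    (ε : F) (hε : ε = 1 ∨ ε = -1) (hT2 : T ∘ₗ T = ε • LinearMap.id)
    (s : F) (hs : s ^ 2 = ε) :
    let S : Set (W →ₗ[F] W) := {L | ∀ σ : Equiv.Perm (Fin n), L ∘ₗ ρ σ = ρ σ ∘ₗ L}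
    let A : Set (W →ₗ[F] W) := {L | ∀ σ ∈ alternatingGroup (Fin n), L ∘ₗ ρ σ = ρ σ ∘ₗ L}
    let ω : (W →ₗ[F] W) → (W →ₗ[F] W) := fun b => ε • (T ∘ₗ b ∘ₗ T)
    let ζ : (W →ₗ[F] W) × (W →ₗ[F] W) → (W →ₗ[F] W) := fun p => p.1 + s • (p.2 ∘ₗ T)
    IsLinearMap F ζ ∧ Set.BijOn ζ (S ×ˢ S) A ∧
      (∀ b₁ b₂ c₁ c₂ : W →ₗ[F] W, b₁ ∈ S → b₂ ∈ S → c₁ ∈ S → c₂ ∈ S →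
        ζ (b₁, b₂) ∘ₗ ζ (c₁, c₂) =
          ζ (b₁ ∘ₗ c₁ + b₂ ∘ₗ ω c₂, b₁ ∘ₗ c₂ + b₂ ∘ₗ ω c₁)) := by
  intro S A ω ζ
  -- scalar facts
  have hε2 : ε * ε = 1 := by rcases hε with h | h <;> simp [h]
  have hε0 : ε ≠ 0 := by rcases hε with h | h <;> simp [h]
  have hs0 : s ≠ 0 := by
    intro h; rw [h] at hs; exact hε0 (by simpa using hs.symm)
  have hss : s * s = ε := by rw [← hs]; ring
  -- the odd transposition τ
  have h01 : (⟨0, by omega⟩ : Fin n) ≠ ⟨1, by omega⟩ := by simp [Fin.ext_iff]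
  set τ : Equiv.Perm (Fin n) := Equiv.swap ⟨0, by omega⟩ ⟨1, by omega⟩ with hτdef
  have hτ2 : τ * τ = 1 := Equiv.swap_mul_self _ _
  have hτsignU : Equiv.Perm.sign τ = -1 := Equiv.Perm.sign_swap h01
  have hτsign : ((Equiv.Perm.sign τ : ℤ) : F) = -1 := by rw [hτsignU]; simp
  have hρτ2 : ρ τ * ρ τ = 1 := by rw [← map_mul, hτ2, map_one]
  have hT2' : T * T = ε • 1 := by
    simpa [Module.End.mul_eq_comp, Module.End.one_eq_id] using hT2
  have hτT : ρ τ * T = -(T * ρ τ) := by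
    simp only [Module.End.mul_eq_comp]
    rw [hT τ, hτsign, neg_smul, one_smul]
  have hTτ : T * ρ τ = -(ρ τ * T) := by rw [hτT, neg_neg]
  have hTcomm : ∀ σ ∈ alternatingGroup (Fin n), T * ρ σ = ρ σ * T := by
    intro σ hσ
    have h1 : Equiv.Perm.sign σ = 1 := Equiv.Perm.mem_alternatingGroup.mp hσ
    have := hT σ
    rw [h1] at this
    simp only [Module.End.mul_eq_comp]
    simpa using this.symm
  -- membership criteria in terms of *
  have hSmem : ∀ b : W →ₗ[F] W, b ∈ S ↔ ∀ σ, b * ρ σ = ρ σ * b := by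
    intro b; simp only [S, Set.mem_setOf_eq, Module.End.mul_eq_comp]
  have hAmem : ∀ b : W →ₗ[F] W,
      b ∈ A ↔ ∀ σ ∈ alternatingGroup (Fin n), b * ρ σ = ρ σ * b := by
    intro b; simp only [A, Set.mem_setOf_eq, Module.End.mul_eq_comp]
  -- generation: commuting with Aₙ and with τ gives membership in S
  have hSgen : ∀ b : W →ₗ[F] W,
      (∀ σ ∈ alternatingGroup (Fin n), b * ρ σ = ρ σ * b) →
      b * ρ τ = ρ τ * b → b ∈ S := by
    intro b hb hbτ
    rw [hSmem]
    intro σ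
    rcases Int.units_eq_one_or (Equiv.Perm.sign σ) with h1 | h1
    · exact hb σ (Equiv.Perm.mem_alternatingGroup.mpr h1)
    · have hστ : σ * τ ∈ alternatingGroup (Fin n) := by
        rw [Equiv.Perm.mem_alternatingGroup, map_mul, h1, hτsignU]; decide
      have hσeq : σ = (σ * τ) * τ := by rw [mul_assoc, hτ2, mul_one]
      rw [hσeq, map_mul, ← mul_assoc, hb _ hστ, mul_assoc, hbτ, ← mul_assoc]
  -- Part 1 : linearity
  have part1 : IsLinearMap F ζ := by
    constructor
    · intro p q
      simp only [ζ, Prod.fst_add, Prod.snd_add, LinearMap.add_comp, smul_add]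
      abel
    · intro c p
      simp only [ζ, Prod.smul_fst, Prod.smul_snd, LinearMap.smul_comp, smul_add,
        smul_smul, mul_comm]
  -- Part 3 : multiplication rule (holds for all b,c)
  have part3 : ∀ b₁ b₂ c₁ c₂ : W →ₗ[F] W,
      ζ (b₁, b₂) ∘ₗ ζ (c₁, c₂) =
        ζ (b₁ ∘ₗ c₁ + b₂ ∘ₗ ω c₂, b₁ ∘ₗ c₂ + b₂ ∘ₗ ω c₁) := by
    intro b₁ b₂ c₁ c₂
    simp only [ζ, ω, ← Module.End.mul_eq_comp]
    simp only [add_mul, mul_add, smul_mul_assoc, mul_smul_comm, smul_add,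
      smul_smul, mul_assoc]
    rw [hT2']
    simp only [mul_smul_comm, smul_smul, mul_one]
    rw [hss, mul_assoc s ε ε, hε2, mul_one]
    abel
  -- MapsTo
  have mapsTo : Set.MapsTo ζ (S ×ˢ S) A := by
    intro p hp
    rw [Set.mem_prod] at hp
    rw [hAmem]
    intro σ hσ
    simp only [ζ, ← Module.End.mul_eq_comp, add_mul, mul_add, smul_mul_assoc,
      mul_smul_comm]
    rw [(hSmem p.1).1 hp.1 σ, mul_assoc, hTcomm σ hσ, ← mul_assoc,
      (hSmem p.2).1 hp.2 σ, mul_assoc]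
  -- InjOn
  have injOn : Set.InjOn ζ (S ×ˢ S) := by
    intro p hp q hq heq
    rw [Set.mem_prod] at hp hq
    set a := p.1 - q.1 with ha
    set d := q.2 - p.2 with hd
    have haS : ∀ σ, a * ρ σ = ρ σ * a := by
      intro σ
      simp only [ha, sub_mul, mul_sub, (hSmem p.1).1 hp.1 σ, (hSmem q.1).1 hq.1 σ]
    have hdS : ∀ σ, d * ρ σ = ρ σ * d := by
      intro σ
      simp only [hd, sub_mul, mul_sub, (hSmem p.2).1 hp.2 σ, (hSmem q.2).1 hq.2 σ]
    have heq' : p.1 + s • (p.2 * T) = q.1 + s • (q.2 * T) := by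
      simpa only [ζ, ← Module.End.mul_eq_comp] using heq
    have had : a = s • (d * T) := by
      rw [ha, hd, sub_mul, smul_sub, sub_eq_sub_iff_add_eq_add]
      exact heq'.trans (add_comm _ _)
    have h2' : a * ρ τ = -(ρ τ * a) := by
      rw [had, smul_mul_assoc, mul_assoc, hTτ, mul_neg, mul_smul_comm, smul_neg,
        neg_inj, ← mul_assoc, hdS τ, mul_assoc]
    have hτa : ρ τ * a = 0 := by
      have h3 : (2 : F) • (ρ τ * a) = 0 := by
        rw [two_smul]
        nth_rewrite 1 [← haS τ]
        rw [h2', neg_add_cancel]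
      rcases smul_eq_zero.mp h3 with h | h
      · exact absurd h h2
      · exact h
    have ha0 : a = 0 := by
      calc a = (ρ τ * ρ τ) * a := by rw [hρτ2, one_mul]
        _ = ρ τ * (ρ τ * a) := mul_assoc _ _ _
        _ = 0 := by rw [hτa, mul_zero]
    have hdT : d * T = 0 := by
      rcases smul_eq_zero.mp (ha0 ▸ had).symm with h | h
      · exact absurd h hs0
      · exact h
    have hd0 : d = 0 := by
      ext x
      obtain ⟨y, hy⟩ := hTbij.2 x
      have := LinearMap.congr_fun hdT y
      simpa [Module.End.mul_apply, hy] using this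
    have e1 : p.1 = q.1 := by rwa [ha, sub_eq_zero] at ha0
    have e2 : p.2 = q.2 := by
      have := hd0
      rw [hd, sub_eq_zero] at this
      exact this.symm
    exact Prod.ext e1 e2
  -- SurjOn
  have surjOn : Set.SurjOn ζ (S ×ˢ S) A := by
    intro L hL
    rw [hAmem] at hL
    set L' : W →ₗ[F] W := ρ τ * L * ρ τ with hL'def
    have hL'τ : L' * ρ τ = ρ τ * L := by
      rw [hL'def, mul_assoc, mul_assoc, hρτ2, mul_one]
    have hτL' : ρ τ * L' = L * ρ τ := by
      rw [hL'def, ← mul_assoc, ← mul_assoc, hρτ2, one_mul]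
    have hL'A : ∀ σ ∈ alternatingGroup (Fin n), L' * ρ σ = ρ σ * L' := by
      intro σ hσ
      have hconj : τ * σ * τ ∈ alternatingGroup (Fin n) := by
        rw [Equiv.Perm.mem_alternatingGroup] at hσ ⊢
        simp [hσ, hτsignU]
      have key : ρ τ * (L * (ρ τ * ρ σ)) = ρ σ * (ρ τ * (L * ρ τ)) := by
        rw [← map_mul, show τ * σ = (τ * σ * τ) * τ by simp [mul_assoc, hτ2],
          map_mul, ← mul_assoc L, hL _ hconj, mul_assoc, ← mul_assoc (ρ τ),
          ← map_mul, show τ * (τ * σ * τ) = σ * τ by simp [← mul_assoc, hτ2],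
          map_mul, mul_assoc]
      calc L' * ρ σ = ρ τ * (L * (ρ τ * ρ σ)) := by
            rw [hL'def, mul_assoc, mul_assoc]
        _ = ρ σ * (ρ τ * (L * ρ τ)) := key
        _ = ρ σ * L' := by rw [hL'def, mul_assoc]
    set b₁ : W →ₗ[F] W := (2⁻¹ : F) • (L + L') with hb₁def
    set b₂ : W →ₗ[F] W := (2⁻¹ * (s⁻¹ * ε)) • ((L - L') * T) with hb₂def
    have hb₁S : b₁ ∈ S := by
      apply hSgen
      · intro σ hσ
        simp only [hb₁def, smul_mul_assoc, mul_smul_comm, add_mul, mul_add,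
          hL σ hσ, hL'A σ hσ]
      · simp only [hb₁def, smul_mul_assoc, mul_smul_comm, add_mul, mul_add,
          hL'τ, hτL']
        rw [add_comm]
    have hMτ : (L - L') * ρ τ = -(ρ τ * (L - L')) := by
      simp only [sub_mul, mul_sub, hL'τ, hτL', neg_sub]
    have hb₂S : b₂ ∈ S := by
      apply hSgen
      · intro σ hσ
        simp only [hb₂def, smul_mul_assoc, mul_smul_comm]
        congr 1
        rw [mul_assoc, hTcomm σ hσ, ← mul_assoc]
        simp only [sub_mul, mul_sub, hL σ hσ, hL'A σ hσ]
        rw [mul_assoc, mul_assoc]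
      · simp only [hb₂def, smul_mul_assoc, mul_smul_comm]
        congr 1
        rw [mul_assoc, hTτ, mul_neg, ← mul_assoc, hMτ, neg_mul, neg_neg,
          mul_assoc]
    refine ⟨(b₁, b₂), Set.mem_prod.mpr ⟨hb₁S, hb₂S⟩, ?_⟩
    have hcoef : s * (2⁻¹ * (s⁻¹ * ε) * ε) = 2⁻¹ := by
      have hc : s * (2⁻¹ * (s⁻¹ * ε) * ε) = 2⁻¹ * (ε * ε) * (s * s⁻¹) := by ring
      rw [hc, hε2, mul_inv_cancel₀ hs0, mul_one, mul_one]
    show b₁ + s • (b₂ ∘ₗ T) = L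
    simp only [← Module.End.mul_eq_comp, hb₂def, hb₁def, smul_mul_assoc,
      smul_smul, mul_assoc (L - L'), hT2', mul_smul_comm, mul_one, smul_smul,
      hcoef]
    rw [smul_add, smul_sub]
    have h2' : (2⁻¹ : F) + 2⁻¹ = 1 := by
      rw [← two_mul, mul_inv_cancel₀ h2]
    calc (2⁻¹ : F) • L + (2⁻¹ : F) • L' + ((2⁻¹ : F) • L - (2⁻¹ : F) • L') = ((2⁻¹ : F) + 2⁻¹) • L := by
          rw [add_smul]; abel
      _ = L := by rw [h2', one_smul]
  exact ⟨part1, ⟨mapsTo, injOn, surjOn⟩, fun b₁ b₂ c₁ c₂ _ _ _ _ => part3 b₁ b₂ c₁ c₂⟩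
end

section
/- Let F be a field with char F ≠ 2, n ≥ 2, ρ a linear representation of Sₙ on an F-vector space W, and T an invertible F-linear endomorphism of W satisfying ρ_σ ∘ T = sgn(σ)·(T ∘ ρ_σ) for all σ ∈ Sₙ. Then End_{Aₙ}(W) is the internal direct sum of End_{Sₙ}(W) and T∘End_{Sₙ}(W) := {T∘b : b ∈ End_{Sₙ}(W)}; in particular, if W is finite-dimensional then dim_F End_{Aₙ}(W) = 2·dim_F End_{Sₙ}(W). -/
/-- The commutant of the restriction of a representation `ρ` of `G` on `W` to a set
`s ⊆ G` of group elements: all `F`-linear endomorphisms of `W` commuting with `ρ_σ`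
for every `σ ∈ s`.  Taking `s = Set.univ` gives `End_{Sₙ}(W)`, and taking
`s = alternatingGroup` gives `End_{Aₙ}(W)`. -/
def commutant (F : Type*) [Field F] {G : Type*} [Group G]
    {W : Type*} [AddCommGroup W] [Module F W]
    (ρ : Representation F G W) (s : Set G) : Submodule F (W →ₗ[F] W) where
  carrier := {L | ∀ σ ∈ s, L ∘ₗ ρ σ = ρ σ ∘ₗ L}
  zero_mem' := by intro σ _; simp
  add_mem' := by
    intro a b ha hb σ hσ
    simp only [LinearMap.add_comp, LinearMap.comp_add, ha σ hσ, hb σ hσ]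
  smul_mem' := by
    intro c a ha σ hσ
    simp only [LinearMap.smul_comp, LinearMap.comp_smul, ha σ hσ]

private lemma conj_comm_aux {R : Type*} [Ring R] (u a b : R) (hu : u * u = 1)
    (h : a * (u * b * u) = u * b * u * a) : u * a * u * b = b * (u * a * u) := by
  have hu' : ∀ x : R, u * (u * x) = x := fun x => by rw [← mul_assoc, hu, one_mul]
  have h2 := congrArg (fun x => u * x * u) h
  simp only [mul_assoc] at h2 ⊢
  rw [hu, mul_one, hu'] at h2
  exact h2

/-- Let `F` be a field with `char F ≠ 2`, `n ≥ 2`, `ρ` a representation of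
`Sₙ` on an `F`-vector space `W`, and `T` an invertible `F`-linear endomorphism of `W` with
`ρ_σ ∘ T = sgn(σ) • (T ∘ ρ_σ)` for all `σ`.  Then `End_{Aₙ}(W)` is the internal direct sum
of `End_{Sₙ}(W)` and `T ∘ End_{Sₙ}(W)`; in particular if `W` is finite dimensional then
`dim End_{Aₙ}(W) = 2 · dim End_{Sₙ}(W)`. -/
theorem stmt3 (F : Type*) [Field F] (h2 : (2 : F) ≠ 0) (n : ℕ) (hn : 2 ≤ n)
    (W : Type*) [AddCommGroup W] [Module F W]
    (ρ : Representation F (Equiv.Perm (Fin n)) W)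
    (T : W →ₗ[F] W) (hTbij : Function.Bijective T)
    (hT : ∀ σ : Equiv.Perm (Fin n),
      ρ σ ∘ₗ T = ((Equiv.Perm.sign σ : ℤ) : F) • (T ∘ₗ ρ σ)) :
    let S := commutant F ρ Set.univ
    let A := commutant F ρ
      ((alternatingGroup (Fin n) : Subgroup (Equiv.Perm (Fin n))) : Set (Equiv.Perm (Fin n)))
    let TS := Submodule.map (LinearMap.mulLeft F T) S
    S ⊓ TS = ⊥ ∧ S ⊔ TS = A ∧
      (FiniteDimensional F W → Module.finrank F A = 2 * Module.finrank F S) := by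
  intro S A TS
  classical
  set ε : Equiv.Perm (Fin n) → F := fun σ => ((Equiv.Perm.sign σ : ℤ) : F) with hεdef
  have hε2 : ∀ σ, ε σ * ε σ = 1 := by
    intro σ
    rcases Int.units_eq_one_or (Equiv.Perm.sign σ) with h | h <;> simp [hεdef, h]
  have hεeven : ∀ σ, Equiv.Perm.sign σ = 1 → ε σ = 1 := by
    intro σ h; simp [hεdef, h]
  -- rewrite hT in multiplication form
  have hT' : ∀ σ, ρ σ * T = ε σ • (T * ρ σ) := by
    intro σ; simpa [Module.End.mul_eq_comp] using hT σ
  -- membership criteria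
  have memS : ∀ L : W →ₗ[F] W, L ∈ S ↔ ∀ σ, L * ρ σ = ρ σ * L := by
    intro L
    constructor
    · intro h σ; simpa [Module.End.mul_eq_comp] using h σ (Set.mem_univ σ)
    · intro h σ _; simpa [Module.End.mul_eq_comp] using h σ
  have memA : ∀ L : W →ₗ[F] W,
      L ∈ A ↔ ∀ σ, Equiv.Perm.sign σ = 1 → L * ρ σ = ρ σ * L := by
    intro L
    constructor
    · intro h σ hσ
      simpa [Module.End.mul_eq_comp] using h σ (Equiv.Perm.mem_alternatingGroup.mpr hσ)
    · intro h σ hσ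
      simpa [Module.End.mul_eq_comp] using h σ (Equiv.Perm.mem_alternatingGroup.mp hσ)
  -- inverse of T
  set e : W ≃ₗ[F] W := LinearEquiv.ofBijective T hTbij with hedef
  set T' : W →ₗ[F] W := (e.symm : W →ₗ[F] W) with hT'def
  have hT'T : T' * T = 1 := by
    ext x
    simp [Module.End.mul_apply, hT'def, hedef]
  have hTT' : T * T' = 1 := by
    ext x
    simp [Module.End.mul_apply, hT'def, hedef]
  have hTinv : ∀ σ, T' * ρ σ = ε σ • (ρ σ * T') := by
    intro σ
    have h1 : T' * ρ σ = T' * (ρ σ * T) * T' := by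
      rw [mul_assoc, mul_assoc, hTT', mul_one]
    rw [h1, hT' σ, mul_smul_comm, smul_mul_assoc]
    rw [show T' * (T * ρ σ) * T' = T' * T * (ρ σ * T') by noncomm_ring, hT'T, one_mul]
  have hρTinv : ∀ σ, ρ σ * T' = ε σ • (T' * ρ σ) := by
    intro σ
    rw [hTinv σ, smul_smul, hε2, one_smul]
  -- the transposition
  have h01 : (⟨0, by omega⟩ : Fin n) ≠ ⟨1, by omega⟩ := by
    simp [Fin.ext_iff]
  set τ : Equiv.Perm (Fin n) := Equiv.swap ⟨0, by omega⟩ ⟨1, by omega⟩ with hτdef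
  have hsτ : Equiv.Perm.sign τ = -1 := Equiv.Perm.sign_swap h01
  have hττ : ρ τ * ρ τ = 1 := by
    rw [← map_mul]
    simp [hτdef, Equiv.swap_mul_self]
  -- sign splitting: every σ is even or τ * (even)
  have hsplit : ∀ σ : Equiv.Perm (Fin n), Equiv.Perm.sign σ = -1 →
      Equiv.Perm.sign (τ * σ) = 1 ∧ σ = τ * (τ * σ) := by
    intro σ hσ
    constructor
    · simp [map_mul, hsτ, hσ]
    · rw [← mul_assoc, hτdef, Equiv.swap_mul_self, one_mul]
  -- inf = ⊥
  have hinf : S ⊓ TS = ⊥ := by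
    apply le_bot_iff.mp
    rintro a ⟨haS, b, hbS, rfl⟩
    simp only [LinearMap.mulLeft_apply] at haS ⊢
    have h1 : ρ τ * (T * b) = (T * b) * ρ τ := ((memS _).mp haS τ).symm
    have hh2 : ρ τ * (T * b) = ε τ • ((T * b) * ρ τ) := by
      rw [← mul_assoc, hT' τ, smul_mul_assoc, mul_assoc, ← (memS _).mp hbS τ, ← mul_assoc]
    have hετ : ε τ = -1 := by simp [hεdef, hsτ]
    rw [hετ, neg_one_smul, ← h1] at hh2
    have h3 : (2 : F) • (ρ τ * (T * b)) = 0 := by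
      rw [two_smul]
      nth_rewrite 1 [hh2]
      simp
    have h4 : ρ τ * (T * b) = 0 := by
      have := congrArg (fun x => (2 : F)⁻¹ • x) h3
      simpa [smul_smul, inv_mul_cancel₀ h2] using this
    have h5 : T * b = 0 := by
      have := congrArg (fun x => ρ τ * x) h4
      simpa [← mul_assoc, hττ] using this
    simp [h5, Submodule.mem_bot]
  -- TS ≤ A and S ≤ A
  have hSA : S ≤ A := by
    intro a ha
    rw [memA]
    intro σ _
    exact (memS a).mp ha σ
  have hTSA : TS ≤ A := by
    rintro a ⟨b, hbS, rfl⟩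
    simp only [LinearMap.mulLeft_apply]
    rw [memA]
    intro σ hσ
    rw [mul_assoc, (memS b).mp hbS σ, ← mul_assoc, ← mul_assoc, hT' σ, hεeven σ hσ, one_smul]
  -- sup = A
  have hsup : S ⊔ TS = A := by
    apply le_antisymm (sup_le hSA hTSA)
    intro a haA
    -- decompose
    set c : W →ₗ[F] W := ρ τ * a * ρ τ with hcdef
    have haeven : ∀ σ, Equiv.Perm.sign σ = 1 → a * ρ σ = ρ σ * a := (memA a).mp haA
    have hceven : ∀ σ, Equiv.Perm.sign σ = 1 → c * ρ σ = ρ σ * c := by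
      intro σ hσ
      have hsgn : Equiv.Perm.sign (τ * σ * τ) = 1 := by simp [map_mul, hsτ, hσ]
      have h := conj_comm_aux (ρ τ) a (ρ σ) hττ
        (by simpa [map_mul, mul_assoc] using haeven (τ * σ * τ) hsgn)
      rw [hcdef]
      simp only [mul_assoc] at h ⊢
      exact h
    have hcτ : c * ρ τ = ρ τ * a := by
      rw [hcdef, show ρ τ * a * ρ τ * ρ τ = ρ τ * a * (ρ τ * ρ τ) by noncomm_ring, hττ,
        mul_one]
    have hτc : ρ τ * c = a * ρ τ := by
      rw [hcdef, show ρ τ * (ρ τ * a * ρ τ) = (ρ τ * ρ τ) * (a * ρ τ) by noncomm_ring, hττ,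
        one_mul]
    set p : W →ₗ[F] W := (2 : F)⁻¹ • (a + c) with hpdef
    set m : W →ₗ[F] W := (2 : F)⁻¹ • (a - c) with hmdef
    have hpm : p + m = a := by
      rw [hpdef, hmdef, ← smul_add]
      have : a + c + (a - c) = (2 : F) • a := by
        rw [two_smul]; abel
      rw [this, smul_smul, inv_mul_cancel₀ h2, one_smul]
    -- p commutes with ρ τ
    have hpτ : p * ρ τ = ρ τ * p := by
      rw [hpdef, smul_mul_assoc, mul_smul_comm, add_mul, mul_add, hcτ, hτc,
        add_comm (a * ρ τ)]
    -- m anticommutes with ρ τ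
    have hmτ : ρ τ * m = -(m * ρ τ) := by
      rw [hmdef, mul_smul_comm, smul_mul_assoc, mul_sub, sub_mul, hcτ, hτc, ← smul_neg,
        neg_sub]
    -- p and m commute with even elements
    have hpeven : ∀ σ, Equiv.Perm.sign σ = 1 → p * ρ σ = ρ σ * p := by
      intro σ hσ
      rw [hpdef, smul_mul_assoc, mul_smul_comm, add_mul, mul_add, haeven σ hσ, hceven σ hσ]
    have hmeven : ∀ σ, Equiv.Perm.sign σ = 1 → m * ρ σ = ρ σ * m := by
      intro σ hσ
      rw [hmdef, smul_mul_assoc, mul_smul_comm, sub_mul, mul_sub, haeven σ hσ, hceven σ hσ]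
    -- p ∈ S
    have hpS : p ∈ S := by
      rw [memS]
      intro σ
      rcases Int.units_eq_one_or (Equiv.Perm.sign σ) with hσ | hσ
      · exact hpeven σ hσ
      · obtain ⟨he, hw⟩ := hsplit σ hσ
        rw [hw, map_mul, ← mul_assoc, hpτ, mul_assoc, hpeven _ he, ← mul_assoc]
    -- key: ρ σ * m = ε σ • (m * ρ σ)
    have hmsgn : ∀ σ, ρ σ * m = ε σ • (m * ρ σ) := by
      intro σ
      rcases Int.units_eq_one_or (Equiv.Perm.sign σ) with hσ | hσ
      · rw [hεeven σ hσ, one_smul, hmeven σ hσ]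
      · obtain ⟨he, hw⟩ := hsplit σ hσ
        have hε : ε σ = -1 := by simp [hεdef, hσ]
        rw [hε, neg_one_smul, hw, map_mul, mul_assoc, ← hmeven _ he, ← mul_assoc, hmτ]
        noncomm_ring
    -- m ∈ TS
    have hmTS : m ∈ TS := by
      refine ⟨T' * m, (memS _).mpr fun σ => ?_, ?_⟩
      · 
        have h1 : m * ρ σ = ε σ • (ρ σ * m) := by
          rw [hmsgn σ, smul_smul, hε2, one_smul]
        rw [mul_assoc, h1, mul_smul_comm, ← mul_assoc, hTinv σ, smul_mul_assoc, smul_smul,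
          hε2, one_smul, mul_assoc]
      · simp only [LinearMap.mulLeft_apply]
        rw [← mul_assoc, hTT', one_mul]
    rw [← hpm]
    exact Submodule.add_mem_sup hpS hmTS
  refine ⟨hinf, hsup, ?_⟩
  intro hfin
  have hinj : Function.Injective (LinearMap.mulLeft F T) := by
    intro b b' h
    simp only [LinearMap.mulLeft_apply] at h
    have := congrArg (fun x => T' * x) h
    simpa [← mul_assoc, hT'T] using this
  have hrank : Module.finrank F TS = Module.finrank F S :=
    (LinearEquiv.finrank_eq (Submodule.equivMapOfInjective _ hinj S)).symm
  have hkey := Submodule.finrank_sup_add_finrank_inf_eq S TS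
  rw [hinf, hsup, hrank] at hkey
  simp only [finrank_bot, add_zero] at hkey
  omega
end

section
/- Fix an integer k ≥ 1. As n → ∞ along integers with n ≡ k (mod 2), the ratio |H′_sc(k,k;n)| / |H_sc(k,k;n)| tends to 1, where H′_sc(k,k;n) is the set of self-conjugate partitions of n in the (k,k)-hook that contain the k×k square (λ_k ≥ k) and H_sc(k,k;n) is the set of all self-conjugate partitions of n in the (k,k)-hook. -/
/-- `H(k,l;n)`: the set of partitions of `n` in the `(k,l)`-hook, i.e. Young diagrams
with `n` cells (the `(i+1)`-st part being `rowLen i`) with `λ_{k+1} ≤ l`. -/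
def hook (k l n : ℕ) : Set YoungDiagram :=
  {μ | μ.card = n ∧ μ.rowLen k ≤ l}

/-- `H_sc(k,k;n)`: the set of self-conjugate partitions of `n` in the `(k,k)`-hook. -/
def hookSC (k n : ℕ) : Set YoungDiagram :=
  {μ | μ ∈ hook k k n ∧ μ.transpose = μ}

/-- `H′_sc(k,k;n)`: the set of self-conjugate partitions of `n` in the `(k,k)`-hook that
contain the `k × k` square, i.e. with `λ_k ≥ k`. -/
def hookSC' (k n : ℕ) : Set YoungDiagram :=
  {μ | μ ∈ hookSC k n ∧ k ≤ μ.rowLen (k - 1)}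

/-!
A self-conjugate diagram with `λ_{k+1} ≤ k` is the union of its first `k` rows and their
transposes, and it misses `H′_sc(k,k;n)` exactly when `λ_k ≤ k - 1`, i.e. when it lies in
`H_sc(k-1,k-1;n)`. Such a diagram is determined by its size and its first `k - 2` rows (among
two candidates with the same first `k - 2` rows, the one with the shorter row `k - 1` is
contained in the other), so there are at most `(n + 1) ^ (k - 2)` of them. On the other hand,
choosing rows `2, …, k` of a diagram in `H′_sc(k,k;n)` in disjoint decreasing windows of width
`M ≈ n / 4k²` and completing row `1` to reach size `n` gives at least `M ^ (k - 1)` of those.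
Hence the complement has proportion `O(1 / n)`.
-/

namespace YoungDiagram

theorem rowLen_le_card (μ : YoungDiagram) (i : ℕ) : μ.rowLen i ≤ μ.card := by
  rw [rowLen_eq_card]
  exact Finset.card_filter_le _ _

theorem eq_of_le_of_card_eq {μ ν : YoungDiagram} (hle : μ ≤ ν) (hcard : μ.card = ν.card) :
    μ = ν :=
  YoungDiagram.ext <| Finset.eq_of_subset_of_card_le (cells_subset_iff.2 hle) hcard.ge

theorem card_eq_zero_of_rowLen_zero {μ : YoungDiagram} (h : μ.rowLen 0 = 0) : μ.card = 0 := by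
  refine Finset.card_eq_zero.2 (Finset.eq_empty_of_forall_notMem fun ⟨i, j⟩ hij => ?_)
  have : (0, 0) ∈ μ := μ.up_left_mem (Nat.zero_le i) (Nat.zero_le j) hij
  rw [mem_iff_lt_rowLen, h] at this
  exact Nat.lt_irrefl 0 this

/-- A self-conjugate diagram with `λ_{d+1} ≤ d` is the union of its first `d` rows and their
transposes. -/
theorem le_of_rowLen_le {μ ν : YoungDiagram} {d : ℕ}
    (hμ : μ.transpose = μ) (hν : ν.transpose = ν) (hd : μ.rowLen d ≤ d)
    (h : ∀ i < d, μ.rowLen i ≤ ν.rowLen i) : μ ≤ ν := by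
  have rows : ∀ i j, i < d → (i, j) ∈ μ → (i, j) ∈ ν := fun i j hi hij =>
    mem_iff_lt_rowLen.2 ((mem_iff_lt_rowLen.1 hij).trans_le (h i hi))
  rintro ⟨i, j⟩ hij
  by_cases hi : i < d
  · exact rows i j hi hij
  have hj : j < d := by
    by_contra hj
    have hdd : (d, d) ∈ μ := μ.up_left_mem (not_lt.1 hi) (not_lt.1 hj) hij
    rw [mem_iff_lt_rowLen] at hdd
    omega
  have hji : (j, i) ∈ μ := by
    rw [← hμ]
    exact mem_transpose.2 hij
  rw [← hν]
  exact mem_transpose.2 (rows j i hj hji)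

theorem eq_of_rowLen_eq_of_card_eq {μ ν : YoungDiagram} {d : ℕ}
    (hμ : μ.transpose = μ) (hν : ν.transpose = ν) (hμd : μ.rowLen (d + 1) ≤ d + 1)
    (hνd : ν.rowLen (d + 1) ≤ d + 1) (hcard : μ.card = ν.card)
    (h : ∀ i < d, μ.rowLen i = ν.rowLen i) : μ = ν := by
  wlog hle : μ.rowLen d ≤ ν.rowLen d generalizing μ ν
  · exact (this hν hμ hνd hμd hcard.symm (fun i hi => (h i hi).symm) (le_of_not_ge hle)).symm
  refine eq_of_le_of_card_eq (le_of_rowLen_le hμ hν hμd fun i hi => ?_) hcard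
  rcases Nat.lt_succ_iff_lt_or_eq.1 hi with hi | rfl
  · exact (h i hi).le
  · exact hle

section SymmOfRows

variable (d : ℕ) (c : ℕ → ℕ)

def rowCells : Finset (ℕ × ℕ) :=
  (Finset.range d).biUnion fun i => {i} ×ˢ Finset.range (d + c i)

def symmCells : Finset (ℕ × ℕ) :=
  rowCells d c ∪ (rowCells d c).map (Equiv.prodComm ℕ ℕ).toEmbedding

variable {d c}

theorem mem_rowCells {i j : ℕ} : (i, j) ∈ rowCells d c ↔ i < d ∧ j < d + c i := by
  simp [rowCells, and_comm]

theorem mem_symmCells {i j : ℕ} :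
    (i, j) ∈ symmCells d c ↔ (i < d ∧ j < d + c i) ∨ (j < d ∧ i < d + c j) := by
  simp [symmCells, Finset.mem_map_equiv, mem_rowCells]

theorem card_rowCells : (rowCells d c).card = ∑ i ∈ Finset.range d, (d + c i) := by
  rw [rowCells, Finset.card_biUnion]
  · simp
  · intro i _ i' _ hii'
    simp only [Function.onFun, Finset.disjoint_left, Finset.mem_product, Finset.mem_singleton]
    exact fun _ h h' => hii' (h.1.symm.trans h'.1)

theorem card_symmCells : (symmCells d c).card = d * d + 2 * ∑ i ∈ Finset.range d, c i := by
  have hinter : rowCells d c ∩ (rowCells d c).map (Equiv.prodComm ℕ ℕ).toEmbedding =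
      Finset.range d ×ˢ Finset.range d := by
    ext ⟨i, j⟩
    simp only [Finset.mem_inter, Finset.mem_map_equiv, Equiv.prodComm_symm, Equiv.prodComm_apply,
      Prod.swap_prod_mk, mem_rowCells, Finset.mem_product, Finset.mem_range]
    omega
  have := Finset.card_union_add_card_inter (rowCells d c)
    ((rowCells d c).map (Equiv.prodComm ℕ ℕ).toEmbedding)
  rw [hinter, Finset.card_map, Finset.card_product, Finset.card_range, card_rowCells,
    Finset.sum_add_distrib, Finset.sum_const, Finset.card_range, smul_eq_mul] at this
  rw [symmCells]
  omega

/-- The self-conjugate diagram with Durfee square `d × d` whose first `d` rows have lengths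
`d + c 0 ≥ ⋯ ≥ d + c (d - 1)`. -/
def symmOfRows (hc : AntitoneOn c (Set.Iio d)) : YoungDiagram where
  cells := symmCells d c
  isLowerSet := by
    rintro ⟨i, j⟩ ⟨i', j'⟩ ⟨hi, hj⟩ h
    simp only [Finset.mem_coe, mem_symmCells] at h ⊢
    dsimp only at hi hj
    rcases h with ⟨hid, hjc⟩ | ⟨hjd, hic⟩
    · have := hc (show i' < d by omega) hid hi
      omega
    · have := hc (show j' < d by omega) hjd hj
      omega

variable (hc : AntitoneOn c (Set.Iio d))

theorem mem_symmOfRows {i j : ℕ} :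
    (i, j) ∈ symmOfRows hc ↔ (i < d ∧ j < d + c i) ∨ (j < d ∧ i < d + c j) :=
  mem_symmCells

theorem transpose_symmOfRows : (symmOfRows hc).transpose = symmOfRows hc := by
  ext ⟨i, j⟩
  simp only [mem_cells, mem_transpose, Prod.swap_prod_mk, mem_symmOfRows]
  tauto

theorem card_symmOfRows : (symmOfRows hc).card = d * d + 2 * ∑ i ∈ Finset.range d, c i :=
  card_symmCells

theorem rowLen_symmOfRows {i : ℕ} (hi : i < d) : (symmOfRows hc).rowLen i = d + c i :=
  eq_of_forall_lt_iff fun j => by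
    rw [← mem_iff_lt_rowLen, mem_symmOfRows]
    omega

theorem rowLen_symmOfRows_self_le : (symmOfRows hc).rowLen d ≤ d := by
  by_contra! h
  have := (mem_symmOfRows hc).1 (mem_iff_lt_rowLen.2 h)
  omega

end SymmOfRows

end YoungDiagram

open YoungDiagram

theorem hookSC_subset_hookSC_succ (k n : ℕ) : hookSC k n ⊆ hookSC (k + 1) n :=
  fun μ ⟨⟨hcard, hk⟩, hμ⟩ =>
    ⟨⟨hcard, (μ.rowLen_anti k (k + 1) k.le_succ).trans (hk.trans k.le_succ)⟩, hμ⟩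

theorem hookSC_succ_diff_hookSC' (e n : ℕ) :
    hookSC (e + 1) n \ hookSC' (e + 1) n = hookSC e n := by
  ext μ
  simp only [hookSC', hookSC, hook, Set.mem_sdiff, Set.mem_ofPred_eq, Nat.add_sub_cancel]
  have := μ.rowLen_anti e (e + 1) e.le_succ
  constructor
  · rintro ⟨hsc, hlt⟩
    exact ⟨⟨hsc.1.1, Nat.le_of_lt_succ (not_le.1 fun h => hlt ⟨hsc, h⟩)⟩, hsc.2⟩
  · rintro ⟨⟨hcard, he⟩, hμ⟩
    exact ⟨⟨⟨hcard, by omega⟩, hμ⟩, fun h => by omega⟩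

theorem injOn_hookSC_succ (e n : ℕ) :
    Set.InjOn (fun μ (i : Fin e) => (⟨min (μ.rowLen i) n, by omega⟩ : Fin (n + 1)))
      (hookSC (e + 1) n) := by
  intro μ ⟨⟨hμn, hμe⟩, hμ⟩ ν ⟨⟨hνn, hνe⟩, hν⟩ h
  refine eq_of_rowLen_eq_of_card_eq hμ hν hμe hνe (hμn.trans hνn.symm) fun i hi => ?_
  have := congrArg Fin.val (congrFun h ⟨i, hi⟩)
  have hμi := hμn ▸ μ.rowLen_le_card i
  have hνi := hνn ▸ ν.rowLen_le_card i
  simp only at this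
  omega

theorem hookSC_finite (k n : ℕ) : (hookSC k n).Finite :=
  Set.Finite.of_injOn (Set.mapsTo_univ _ _) (injOn_hookSC_succ k n) Set.finite_univ
    |>.subset (hookSC_subset_hookSC_succ k n)

theorem ncard_hookSC_succ_le (e n : ℕ) : (hookSC (e + 1) n).ncard ≤ (n + 1) ^ e := by
  simpa using Set.ncard_le_ncard_of_injOn _ (Set.mapsTo_univ _ _) (injOn_hookSC_succ e n)

theorem hookSC_zero_eq_empty {n : ℕ} (hn : n ≠ 0) : hookSC 0 n = ∅ :=
  Set.eq_empty_of_forall_notMem fun _ ⟨⟨hcard, h⟩, _⟩ =>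
    hn (hcard ▸ card_eq_zero_of_rowLen_zero (Nat.le_zero.1 h))

theorem mul_ncard_hookSC_le (k n : ℕ) : n * (hookSC k n).ncard ≤ (n + 1) ^ k := by
  rcases k with _ | e
  · rcases eq_or_ne n 0 with rfl | hn
    · simp
    · simp [hookSC_zero_eq_empty hn]
  · calc n * (hookSC (e + 1) n).ncard ≤ (n + 1) * (n + 1) ^ e :=
          Nat.mul_le_mul n.le_succ (ncard_hookSC_succ_le e n)
      _ = (n + 1) ^ (e + 1) := (pow_succ' _ _).symm

theorem ncard_hookSC_succ (e n : ℕ) :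
    (hookSC (e + 1) n).ncard = (hookSC' (e + 1) n).ncard + (hookSC e n).ncard := by
  have := Set.ncard_sdiff_add_ncard_of_subset (s := hookSC' (e + 1) n) (fun _ h => h.1)
    (hookSC_finite (e + 1) n)
  rw [hookSC_succ_diff_hookSC'] at this
  omega

theorem symmOfRows_mem_hookSC' {e : ℕ} {c : ℕ → ℕ} (hc : AntitoneOn c (Set.Iio (e + 1))) :
    symmOfRows hc ∈
      hookSC' (e + 1) ((e + 1) * (e + 1) + 2 * ∑ i ∈ Finset.range (e + 1), c i) :=
  ⟨⟨⟨card_symmOfRows hc, rowLen_symmOfRows_self_le hc⟩, transpose_symmOfRows hc⟩,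
    by rw [Nat.add_sub_cancel, rowLen_symmOfRows hc e.lt_succ_self]; omega⟩

section StairExcess

variable {e M : ℕ}

/-- The value `u i` is placed in the block `[M * (e - 1 - i), M * (e - i))`; these blocks
decrease with `i`, so every `u` yields an antitone sequence. -/
def stairExcess (u : Fin e → Fin M) (i : ℕ) : ℕ :=
  if h : i < e then M * (e - 1 - i) + u ⟨i, h⟩ else 0

theorem stairExcess_le (u : Fin e → Fin M) (i : ℕ) : stairExcess u i ≤ M * e := by
  unfold stairExcess
  split_ifs with h
  · have hu := (u ⟨i, h⟩).isLt
    have : M * (e - 1 - i) + M ≤ M * e := by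
      rw [← Nat.mul_succ]
      exact Nat.mul_le_mul_left M (by omega)
    omega
  · exact Nat.zero_le _

theorem antitoneOn_stairExcess (u : Fin e → Fin M) :
    AntitoneOn (stairExcess u) (Set.Iio e) := by
  intro i hi j hj hij
  rcases hij.eq_or_lt with rfl | hij
  · rfl
  simp only [Set.mem_Iio] at hi hj
  have hsplit : M * (e - 1 - i) = M * (e - 1 - j) + M * (j - i) := by
    rw [← Nat.mul_add]
    congr 1
    omega
  have hM : M ≤ M * (j - i) := Nat.le_mul_of_pos_right M (by omega)
  have hu := (u ⟨j, hj⟩).isLt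
  simp only [stairExcess, dif_pos hi, dif_pos hj]
  omega

theorem stairExcess_injective : Function.Injective (stairExcess (e := e) (M := M)) := by
  intro u u' h
  funext i
  have := congrFun h i
  simp only [stairExcess, dif_pos i.isLt, Fin.eta] at this
  exact Fin.ext (by omega)

variable (m : ℕ)

def stairRows (u : Fin e → Fin M) : ℕ → ℕ
  | 0 => m - ∑ i ∈ Finset.range e, stairExcess u i
  | i + 1 => stairExcess u i

variable {m}

theorem sum_stairExcess_add_le (hm : (e + 1) * (e + 1) * M ≤ m) (u : Fin e → Fin M) :
    ∑ i ∈ Finset.range e, stairExcess u i + M * e ≤ m := by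
  have := Finset.sum_le_card_nsmul (Finset.range e) (fun i => stairExcess u i) _
    fun i _ => stairExcess_le u i
  rw [Finset.card_range, smul_eq_mul] at this
  have : e * (M * e) + M * e ≤ (e + 1) * (e + 1) * M := by nlinarith
  omega

theorem antitoneOn_stairRows (hm : (e + 1) * (e + 1) * M ≤ m) (u : Fin e → Fin M) :
    AntitoneOn (stairRows m u) (Set.Iio (e + 1)) := by
  rintro (_ | i) hi (_ | j) hj hij
  · rfl
  · have := stairExcess_le u j
    have := sum_stairExcess_add_le hm u
    simp only [stairRows]
    omega
  · omega
  · simp only [Set.mem_Iio] at hi hj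
    exact antitoneOn_stairExcess u (Nat.lt_of_succ_lt_succ hi) (Nat.lt_of_succ_lt_succ hj)
      (Nat.le_of_succ_le_succ hij)

theorem sum_stairRows (hm : (e + 1) * (e + 1) * M ≤ m) (u : Fin e → Fin M) :
    ∑ i ∈ Finset.range (e + 1), stairRows m u i = m := by
  rw [Finset.sum_range_succ']
  have := sum_stairExcess_add_le hm u
  simp only [stairRows]
  omega

end StairExcess

theorem pow_le_ncard_hookSC' (e M m : ℕ) (hm : (e + 1) * (e + 1) * M ≤ m) :
    M ^ e ≤ (hookSC' (e + 1) ((e + 1) * (e + 1) + 2 * m)).ncard := by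
  have hmem (u : Fin e → Fin M) : symmOfRows (antitoneOn_stairRows hm u) ∈
      hookSC' (e + 1) ((e + 1) * (e + 1) + 2 * m) := by
    simpa only [sum_stairRows hm u] using symmOfRows_mem_hookSC' (antitoneOn_stairRows hm u)
  have hinj : Set.InjOn (fun u => symmOfRows (antitoneOn_stairRows hm u)) Set.univ := by
    intro u _ u' _ h
    refine stairExcess_injective (funext fun i => ?_)
    by_cases hi : i < e
    · have := congrArg (rowLen · (i + 1)) h
      simpa [rowLen_symmOfRows _ (Nat.succ_lt_succ hi), stairRows] using this
    · simp [stairExcess, hi]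
  simpa using Set.ncard_le_ncard_of_injOn _ (fun u _ => hmem u) hinj
    ((hookSC_finite _ _).subset fun _ h => h.1)

theorem pos_and_mul_ncard_hookSC_le (e n : ℕ) (hn : 8 * ((e + 1) * (e + 1)) < n)
    (hpar : n % 2 = (e + 1) % 2) :
    0 < (hookSC' (e + 1) n).ncard ∧
      n * (hookSC e n).ncard ≤ (8 * ((e + 1) * (e + 1))) ^ e * (hookSC' (e + 1) n).ncard := by
  have hKpar : (e + 1) * (e + 1) % 2 = (e + 1) % 2 := by
    rcases Nat.mod_two_eq_zero_or_one (e + 1) with h | h <;> simp [Nat.mul_mod, h]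
  obtain ⟨m, rfl⟩ : ∃ m, n = (e + 1) * (e + 1) + 2 * m :=
    ⟨(n - (e + 1) * (e + 1)) / 2, by omega⟩
  have hK0 : 0 < (e + 1) * (e + 1) := by positivity
  generalize hK : (e + 1) * (e + 1) = K at hn hK0 ⊢
  -- Compare with the `M ^ e` diagrams of `pow_le_ncard_hookSC'`, where `M ≈ n / 4K`.
  obtain ⟨M, r, hr, hdecomp⟩ : ∃ M r, r < 4 * K ∧ K + 2 * m = 4 * (K * M) + r :=
    ⟨_, _, Nat.mod_lt _ (by omega), by rw [← mul_assoc, Nat.div_add_mod]⟩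
  have hM : 0 < M := Nat.pos_of_ne_zero fun h => by simp only [h, mul_zero] at hdecomp; omega
  have hlow := pow_le_ncard_hookSC' e M m (by rw [hK]; omega)
  rw [hK] at hlow
  refine ⟨(pow_pos hM e).trans_le hlow, ?_⟩
  calc (K + 2 * m) * (hookSC e (K + 2 * m)).ncard ≤ (K + 2 * m + 1) ^ e :=
        mul_ncard_hookSC_le e _
    _ ≤ (8 * K * M) ^ e := Nat.pow_le_pow_left (by rw [mul_assoc]; omega) e
    _ = (8 * K) ^ e * M ^ e := mul_pow _ _ _
    _ ≤ (8 * K) ^ e * (hookSC' (e + 1) (K + 2 * m)).ncard := Nat.mul_le_mul_left _ hlow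

open Filter Topology in
theorem tendsto_div_add_nhds_one {l : Filter ℕ} (hl : l ≤ atTop) {f g : ℕ → ℕ} (C : ℕ)
    (h : ∀ᶠ n in l, 0 < f n ∧ n * g n ≤ C * f n) :
    Tendsto (fun n => (f n : ℝ) / (f n + g n)) l (𝓝 1) := by
  have hratio : Tendsto (fun n => (g n : ℝ) / f n) l (𝓝 0) := by
    refine tendsto_of_tendsto_of_tendsto_of_le_of_le' tendsto_const_nhds
      ((tendsto_const_div_atTop_nhds_zero_nat (C : ℝ)).mono_left hl)
      (Eventually.of_forall fun n => by positivity) ?_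
    filter_upwards [h, hl (eventually_gt_atTop 0)] with n ⟨hf, hmul⟩ hn
    rw [div_le_div_iff₀ (by exact_mod_cast hf) (by exact_mod_cast hn)]
    exact_mod_cast (mul_comm (g n) n).trans_le hmul
  have heq : ∀ᶠ n in l, (1 + (g n : ℝ) / f n)⁻¹ = f n / (f n + g n) := by
    filter_upwards [h] with n hn
    have hf : (f n : ℝ) ≠ 0 := by exact_mod_cast hn.1.ne'
    rw [one_add_div hf, inv_div]
  simpa using ((tendsto_const_nhds.add hratio).inv₀ (by norm_num)).congr' heq

/-- Fix an integer `k ≥ 1`.  As `n → ∞` along integers with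
`n ≡ k (mod 2)`, the ratio `|H′_sc(k,k;n)| / |H_sc(k,k;n)|` tends to `1`. -/
theorem stmt15 (k : ℕ) (hk : 1 ≤ k) :
    Filter.Tendsto
      (fun n : ℕ => ((hookSC' k n).ncard : ℝ) / ((hookSC k n).ncard : ℝ))
      (Filter.atTop ⊓ Filter.principal {n : ℕ | n % 2 = k % 2})
      (nhds 1) := by
  obtain ⟨e, rfl⟩ : ∃ e, k = e + 1 := ⟨k - 1, by omega⟩
  simp only [ncard_hookSC_succ, Nat.cast_add]
  refine tendsto_div_add_nhds_one inf_le_left ((8 * ((e + 1) * (e + 1))) ^ e)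
    (Filter.eventually_inf_principal.2 ?_)
  filter_upwards [Filter.eventually_gt_atTop (8 * ((e + 1) * (e + 1)))] with n hn hpar
  exact pos_and_mul_ncard_hookSC_le e n hn hpar
end

section
/- Fix an integer k ≥ 1 and let p_k(m) denote the number of partitions of m into at most k parts. Then p_k(m) · k!·(k−1)! / m^{k−1} → 1 as m → ∞; that is, p_k(m) is asymptotically m^{k−1} / (k!·(k−1)!). -/
/-!
Write a partition of `m` into at most `k` parts as an antitone tuple `g : Fin k → ℕ` with sum
`m`. Every tuple with sum `m` is a rearrangement `g ∘ σ` of such a `g`, so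
`C(m + k - 1, k - 1) ≤ k! · p_k(m)`. Conversely, adding the staircase `(k - 1, …, 1, 0)` makes
`g` strictly antitone, hence recoverable from the range of any rearrangement; so
`(g, σ) ↦ (g + staircase) ∘ σ` is injective, and
`k! · p_k(m) ≤ C(m + k(k-1)/2 + k - 1, k - 1)`.
Both binomial bounds are asymptotic to `m^(k-1) / (k-1)!`.
-/

/-- `p_k(m)`: the number of partitions of `m` into at most `k` parts, i.e. the number of
Young diagrams with `m` cells (the `(i+1)`-st part being `rowLen i`) whose `(k+1)`-st
part is zero. -/
noncomputable def numPartsLe (k m : ℕ) : ℕ :=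
  Set.ncard {μ : YoungDiagram | μ.card = m ∧ μ.rowLen k = 0}

open Finset
open scoped Nat

namespace YoungDiagram

variable {μ ν : YoungDiagram} {n : ℕ}

theorem rowLen_eq_zero_iff {i : ℕ} : μ.rowLen i = 0 ↔ (i, 0) ∉ μ := by
  rw [mem_iff_lt_rowLen, Nat.pos_iff_ne_zero, not_not]

theorem card_eq_sum_rowLen (h : μ.rowLen n = 0) : μ.card = ∑ i ∈ range n, μ.rowLen i := by
  have hmaps : Set.MapsTo Prod.fst (μ.cells : Set (ℕ × ℕ)) (range n : Set ℕ) := by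
    rintro ⟨i, j⟩ hij
    have hj : j < μ.rowLen i := mem_iff_lt_rowLen.mp hij
    have := μ.rowLen_anti n i
    simp only [mem_coe, mem_range]
    omega
  rw [YoungDiagram.card, card_eq_sum_card_fiberwise hmaps]
  exact sum_congr rfl fun i _ => (μ.rowLen_eq_card).symm

theorem ext_of_rowLen (h : ∀ i, μ.rowLen i = ν.rowLen i) : μ = ν := by
  ext ⟨i, j⟩
  simp only [mem_cells, mem_iff_lt_rowLen, h]

section ofAntitone

variable {k : ℕ} {f : Fin k → ℕ} (hf : Antitone f)

def ofAntitone : YoungDiagram :=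
  ofRowLens (List.ofFn f) (List.sortedGE_ofFn_iff.mpr hf)

theorem rowLen_ofAntitone (i : Fin k) : (ofAntitone hf).rowLen i = f i := by
  simpa [ofAntitone] using rowLen_ofRowLens (hw := List.sortedGE_ofFn_iff.mpr hf) ⟨i, by simp⟩

theorem rowLen_ofAntitone_length : (ofAntitone hf).rowLen k = 0 := by
  simp [rowLen_eq_zero_iff, ofAntitone, mem_ofRowLens]

theorem card_ofAntitone : (ofAntitone hf).card = ∑ i, f i := by
  rw [card_eq_sum_rowLen (rowLen_ofAntitone_length hf), ← Fin.sum_univ_eq_sum_range]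
  exact sum_congr rfl fun i _ => rowLen_ofAntitone hf i

end ofAntitone

end YoungDiagram

def antitoneTuples (k m : ℕ) : Finset (Fin k → ℕ) :=
  {f ∈ Nat.antidiagonalTuple k m | Antitone f}

theorem mem_antitoneTuples {k m : ℕ} {f : Fin k → ℕ} :
    f ∈ antitoneTuples k m ↔ ∑ i, f i = m ∧ Antitone f := by
  simp [antitoneTuples, Nat.mem_antidiagonalTuple]

theorem numPartsLe_eq_card_antitoneTuples (k m : ℕ) :
    numPartsLe k m = #(antitoneTuples k m) := by
  set S := {μ : YoungDiagram | μ.card = m ∧ μ.rowLen k = 0}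
  let rowLens : YoungDiagram → Fin k → ℕ := fun μ i => μ.rowLen i
  have hinj : Set.InjOn rowLens S := by
    rintro μ ⟨-, hμ⟩ ν ⟨-, hν⟩ hμν
    refine YoungDiagram.ext_of_rowLen fun i => ?_
    rcases lt_or_ge i k with hi | hi
    · exact congrFun hμν ⟨i, hi⟩
    · have := μ.rowLen_anti k i hi
      have := ν.rowLen_anti k i hi
      omega
  have himage : rowLens '' S = antitoneTuples k m := by
    ext f
    simp only [Set.mem_image, mem_coe, mem_antitoneTuples]
    constructor
    · rintro ⟨μ, ⟨rfl, hμ⟩, rfl⟩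
      refine ⟨?_, fun i j hij => μ.rowLen_anti i j hij⟩
      rw [YoungDiagram.card_eq_sum_rowLen hμ, ← Fin.sum_univ_eq_sum_range]
    · rintro ⟨rfl, hf⟩
      refine ⟨YoungDiagram.ofAntitone hf, ⟨YoungDiagram.card_ofAntitone hf,
        YoungDiagram.rowLen_ofAntitone_length hf⟩, funext (YoungDiagram.rowLen_ofAntitone hf)⟩
  rw [numPartsLe, ← Set.ncard_coe_finset, ← himage, hinj.ncard_image]

theorem Fin.sum_val_rev (k : ℕ) : ∑ i : Fin k, (Fin.rev i : ℕ) = k.choose 2 := by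
  rw [Nat.choose_two_right, ← sum_range_id, ← Fin.sum_univ_eq_sum_range (fun i => i)]
  exact Equiv.sum_comp Fin.revPerm (fun i : Fin k => (i : ℕ))

theorem injOn_comp_perm_strictAnti {α : Type*} [Preorder α] {k : ℕ} :
    Set.InjOn (fun p : (Fin k → α) × Equiv.Perm (Fin k) => p.1 ∘ p.2)
      {p | StrictAnti p.1} := by
  rintro ⟨f, σ⟩ hf ⟨g, τ⟩ hg (h : f ∘ σ = g ∘ τ)
  obtain rfl : f = g := (StrictAnti.range_inj hf hg).mp <| by
    rw [← EquivLike.range_comp f σ, h, EquivLike.range_comp]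
  exact Prod.ext rfl (Equiv.ext fun i => hf.injective (congrFun h i))

theorem exists_perm_antitone_comp {α : Type*} [LinearOrder α] {k : ℕ} (f : Fin k → α) :
    ∃ σ : Equiv.Perm (Fin k), Antitone (f ∘ σ) :=
  ⟨Fin.revPerm.trans (Tuple.sort f), (Tuple.monotone_sort f).comp_antitone Fin.rev_anti⟩

theorem card_antidiagonalTuple_le (k m : ℕ) :
    #(Nat.antidiagonalTuple k m) ≤ #(antitoneTuples k m) * k ! := by
  have hcover : Nat.antidiagonalTuple k m ⊆
      (antitoneTuples k m ×ˢ univ).image fun p : _ × Equiv.Perm (Fin k) => p.1 ∘ p.2 := by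
    intro f hf
    obtain ⟨σ, hσ⟩ := exists_perm_antitone_comp f
    rw [Nat.mem_antidiagonalTuple] at hf
    refine mem_image.mpr ⟨(f ∘ σ, σ.symm), mem_product.mpr ⟨?_, mem_univ _⟩, ?_⟩
    · exact mem_antitoneTuples.mpr ⟨(Equiv.sum_comp σ f).trans hf, hσ⟩
    · ext i
      simp
  calc #(Nat.antidiagonalTuple k m)
      ≤ #(antitoneTuples k m ×ˢ (univ : Finset (Equiv.Perm (Fin k)))) :=
        (card_le_card hcover).trans card_image_le
    _ = #(antitoneTuples k m) * k ! := by simp [card_product, Fintype.card_perm]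

theorem card_antitoneTuples_mul_le (k m : ℕ) :
    #(antitoneTuples k m) * k ! ≤ #(Nat.antidiagonalTuple k (m + k.choose 2)) := by
  set s := antitoneTuples k m ×ˢ (univ : Finset (Equiv.Perm (Fin k)))
  let staircase : (Fin k → ℕ) → Fin k → ℕ := fun g i => g i + Fin.rev i
  have hmaps : ∀ p ∈ s, staircase p.1 ∘ p.2 ∈ Nat.antidiagonalTuple k (m + k.choose 2) := by
    rintro ⟨g, σ⟩ hp
    rw [Nat.mem_antidiagonalTuple]
    change ∑ i, staircase g (σ i) = _
    rw [Equiv.sum_comp σ (staircase g), sum_add_distrib,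
      (mem_antitoneTuples.mp (mem_product.mp hp).1).1, Fin.sum_val_rev]
  have hinj :
      Set.InjOn (fun p : (Fin k → ℕ) × Equiv.Perm (Fin k) => staircase p.1 ∘ p.2) s := by
    refine Set.InjOn.comp (f := Prod.map staircase id) injOn_comp_perm_strictAnti ?_
      fun p hp => ?_
    · rintro ⟨g, σ⟩ - ⟨g', σ'⟩ - h
      simp only [Prod.map, Prod.mk.injEq] at h ⊢
      exact ⟨funext fun i => by simpa [staircase] using congrFun h.1 i, h.2⟩
    · exact (mem_antitoneTuples.mp (mem_product.mp hp).1).2.add_strictAnti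
        (Nat.strictMono_cast.comp_strictAnti Fin.rev_strictAnti)
  calc #(antitoneTuples k m) * k ! = #s := by simp [s, card_product, Fintype.card_perm]
    _ ≤ _ := card_le_card_of_injOn _ hmaps hinj

theorem card_antidiagonalTuple_succ (r n : ℕ) :
    #(Nat.antidiagonalTuple (r + 1) n) = (n + r).choose r := by
  have e : Sym (Fin (r + 1)) n ≃ Nat.antidiagonalTuple (r + 1) n :=
    (Sym.equivNatSumOfFintype (Fin (r + 1)) n).trans
      (Equiv.subtypeEquivRight fun _ => Nat.mem_antidiagonalTuple.symm)
  rw [← Fintype.card_coe, ← Fintype.card_congr e, Sym.card_sym_eq_choose, Fintype.card_fin,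
    show r + 1 + n - 1 = n + r by omega]
  exact Nat.choose_symm_add

theorem choose_le_numPartsLe_mul_factorial (r m : ℕ) :
    (m + r).choose r ≤ numPartsLe (r + 1) m * (r + 1)! := by
  rw [← card_antidiagonalTuple_succ, numPartsLe_eq_card_antitoneTuples]
  exact card_antidiagonalTuple_le _ _

theorem numPartsLe_mul_factorial_le_choose (r m : ℕ) :
    numPartsLe (r + 1) m * (r + 1)! ≤ (m + ((r + 1).choose 2 + r)).choose r := by
  rw [← add_assoc, ← card_antidiagonalTuple_succ, numPartsLe_eq_card_antitoneTuples]
  exact card_antitoneTuples_mul_le _ _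

open Filter Asymptotics Topology

theorem isEquivalent_natCast_add (c : ℕ) :
    (fun m : ℕ => ((m + c : ℕ) : ℝ)) ~[atTop] fun m => (m : ℝ) := by
  have hc : (fun _ : ℕ => (c : ℝ)) =o[atTop] fun m : ℕ => (m : ℝ) :=
    isLittleO_const_left.2 <| Or.inr <| tendsto_norm_atTop_atTop.comp tendsto_natCast_atTop_atTop
  refine (IsEquivalent.refl.add_isLittleO hc).congr_left (.of_eq ?_)
  ext m
  push_cast
  rfl

theorem tendsto_choose_add_mul_factorial_div_pow (r c : ℕ) :
    Tendsto (fun m : ℕ => ((m + c).choose r : ℝ) * r ! / (m : ℝ) ^ r) atTop (𝓝 1) := by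
  have hshift : (fun m : ℕ => ((m + c).choose r : ℝ)) ~[atTop]
      fun m => ((m + c : ℕ) : ℝ) ^ r / r ! :=
    (isEquivalent_choose r).comp_tendsto (tendsto_add_atTop_nat c)
  have hequiv := hshift.trans (((isEquivalent_natCast_add c).pow r).div IsEquivalent.refl)
  have hne : ∀ᶠ m : ℕ in atTop, (m : ℝ) ^ r / r ! ≠ 0 := by
    filter_upwards [eventually_ge_atTop 1] with m hm
    positivity
  refine ((isEquivalent_iff_tendsto_one hne).mp hequiv).congr fun m => ?_
  simp only [Pi.div_apply]
  rw [div_div_eq_mul_div]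

theorem tendsto_mul_factorial_div_pow_of_choose_le {a : ℕ → ℕ} {r c₁ c₂ : ℕ}
    (hlow : ∀ m, (m + c₁).choose r ≤ a m) (hup : ∀ m, a m ≤ (m + c₂).choose r) :
    Tendsto (fun m : ℕ => (a m : ℝ) * r ! / (m : ℝ) ^ r) atTop (𝓝 1) := by
  refine tendsto_of_tendsto_of_tendsto_of_le_of_le (tendsto_choose_add_mul_factorial_div_pow r c₁)
    (tendsto_choose_add_mul_factorial_div_pow r c₂) (fun m => ?_) (fun m => ?_)
  · dsimp only
    gcongr
    exact_mod_cast hlow m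
  · dsimp only
    gcongr
    exact_mod_cast hup m

/-- Fix an integer `k ≥ 1`.  Then
`p_k(m) · k!·(k−1)! / m^{k−1} → 1` as `m → ∞`; that is, the number of partitions of `m`
into at most `k` parts is asymptotically `m^{k−1} / (k!·(k−1)!)`. -/
theorem stmt18 (k : ℕ) (hk : 1 ≤ k) :
    Filter.Tendsto
      (fun m : ℕ =>
        (numPartsLe k m : ℝ) * ((Nat.factorial k : ℝ) * (Nat.factorial (k - 1) : ℝ)) /
          (m : ℝ) ^ (k - 1))
      Filter.atTop (nhds 1) := by
  obtain ⟨r, rfl⟩ := Nat.exists_eq_add_of_le' hk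
  refine (tendsto_mul_factorial_div_pow_of_choose_le (choose_le_numPartsLe_mul_factorial r)
    (numPartsLe_mul_factorial_le_choose r)).congr fun m => ?_
  push_cast
  rw [mul_assoc]
end

section
/- Fix an integer k ≥ 1. Then |H(k,k;n)| · k!·k!·(2k−1)! / n^{2k−1} → 1 as n → ∞; that is, the number of partitions of n in the (k,k)-hook is asymptotically n^{2k−1} / (k!·k!·(2k−1)!). -/
/-!
A diagram in the `(k,k)`-hook is its first `k` rows together with the parts of its first `k`
columns below row `k`. Writing both antitone sequences through their consecutive differences
`y, z : Fin k → ℕ` turns a diagram with `n` cells into a solution of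
`∑ (i+1) yᵢ + ∑ (j+1) zⱼ = n`, injectively; conversely every solution of weight `n - k²` is
realised by the diagram consisting of the `k × k` square with arms and legs attached.
Eliminating the weight-one unknown `y₀`, both counts are numbers of lattice points in a
`(2k-1)`-dimensional simplex with weights of product `k!·k!`. Splitting `ℕ` into blocks of
length `wᵢ` compares that simplex with an unweighted one, counted exactly by stars and bars,
so `(2k-1)!·k!·k!·|H(k,k;n)|` lies between `(n - k²)^(2k-1)` and `(n + C)^(2k-1)`.
-/

open Finset Filter Topology
open scoped Nat

section LatticePoints

variable {ι κ : Type*} [Fintype ι] [DecidableEq ι] [Fintype κ] [DecidableEq κ]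

def weightedSimplex (w : ι → ℕ) (n : ℕ) : Finset (ι → ℕ) :=
  {v ∈ Fintype.piFinset fun _ => range (n + 1) | ∑ i, w i * v i ≤ n}

def weightedSlice (w : ι → ℕ) (n : ℕ) : Finset (ι → ℕ) :=
  {v ∈ weightedSimplex w n | ∑ i, w i * v i = n}

theorem mem_weightedSimplex {w : ι → ℕ} (hw : ∀ i, w i ≠ 0) {n : ℕ} {v : ι → ℕ} :
    v ∈ weightedSimplex w n ↔ ∑ i, w i * v i ≤ n := by
  refine ⟨fun h => (mem_filter.mp h).2, fun h => mem_filter.mpr ⟨?_, h⟩⟩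
  refine Fintype.mem_piFinset.mpr fun i => mem_range_succ_iff.mpr ?_
  calc v i ≤ w i * v i := Nat.le_mul_of_pos_left _ (Nat.pos_of_ne_zero (hw i))
    _ ≤ ∑ j, w j * v j := single_le_sum (f := fun j => w j * v j) (by simp) (mem_univ i)
    _ ≤ n := h

theorem mem_weightedSlice {w : ι → ℕ} (hw : ∀ i, w i ≠ 0) {n : ℕ} {v : ι → ℕ} :
    v ∈ weightedSlice w n ↔ ∑ i, w i * v i = n := by
  rw [weightedSlice, mem_filter, mem_weightedSimplex hw]
  exact ⟨And.right, fun h => ⟨h.le, h⟩⟩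

theorem card_weightedSlice_eq_card_weightedSimplex (e : Option ι ≃ κ) {w : κ → ℕ}
    (hw : ∀ j, w j ≠ 0) (he : w (e none) = 1) (n : ℕ) :
    #(weightedSlice w n) = #(weightedSimplex (fun i => w (e (some i))) n) := by
  have hw' : ∀ i, w (e (some i)) ≠ 0 := fun i => hw _
  have hsum (u : κ → ℕ) :
      ∑ j, w j * u j = u (e none) + ∑ i, w (e (some i)) * u (e (some i)) := by
    rw [← e.sum_comp, Fintype.sum_option, he, one_mul]
  refine card_nbij' (fun u i => u (e (some i)))
    (fun v j => (e.symm j).elim (n - ∑ i, w (e (some i)) * v i) v) ?_ ?_ ?_ ?_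
  · intro u hu
    simp only [mem_coe, mem_weightedSlice hw, mem_weightedSimplex hw'] at hu ⊢
    rw [hsum] at hu
    omega
  · intro v hv
    simp only [mem_coe, mem_weightedSlice hw, mem_weightedSimplex hw'] at hv ⊢
    rw [hsum]
    simp only [Equiv.symm_apply_apply, Option.elim_none, Option.elim_some]
    omega
  · intro u hu
    simp only [mem_coe, mem_weightedSlice hw] at hu
    funext j
    obtain ⟨o, rfl⟩ := e.surjective j
    cases o with
    | none => simp only [Equiv.symm_apply_apply, Option.elim_none]; rw [hsum] at hu; omega
    | some i => simp
  · intro v _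
    simp

theorem factorial_mul_card_weightedSimplex_one (n : ℕ) :
    (Fintype.card ι)! * #(weightedSimplex (fun _ : ι => 1) n) =
      (n + Fintype.card ι).descFactorial (Fintype.card ι) := by
  have hslice : #(weightedSlice (fun _ : Option ι => 1) n) = Fintype.card (Sym (Option ι) n) :=
    card_eq_of_equiv_fintype <| (Equiv.subtypeEquivRight fun u => by
      simp [mem_weightedSlice]).trans (Sym.equivNatSumOfFintype (Option ι) n).symm
  rw [← card_weightedSlice_eq_card_weightedSimplex (Equiv.refl (Option ι))
      (w := fun _ => 1) (by simp) rfl, hslice,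
    Sym.card_sym_eq_choose, Fintype.card_option, Nat.descFactorial_eq_factorial_mul_choose,
    Nat.add_right_comm, Nat.add_sub_cancel, add_comm n, Nat.choose_symm_add]

theorem card_image_mul_add_box {w : ι → ℕ} (hw : ∀ i, w i ≠ 0) (S : Finset (ι → ℕ)) :
    #((S ×ˢ Fintype.piFinset fun i => range (w i)).image fun p i => w i * p.1 i + p.2 i) =
      (∏ i, w i) * #S := by
  rw [Finset.card_image_of_injOn, card_product, Fintype.card_piFinset, mul_comm]
  · simp
  rintro ⟨q, r⟩ hqr ⟨q', r'⟩ hqr' h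
  simp only [coe_product, Set.mem_prod, mem_coe, Fintype.mem_piFinset, mem_range] at hqr hqr'
  have hpos i : 0 < w i := Nat.pos_of_ne_zero (hw i)
  have hi i : w i * q i + r i = w i * q' i + r' i := congrFun h i
  refine Prod.ext (funext fun i => ?_) (funext fun i => ?_)
  · have := congrArg (· / w i) (hi i)
    simpa [Nat.mul_add_div (hpos i), Nat.div_eq_of_lt (hqr.2 i), Nat.div_eq_of_lt (hqr'.2 i)]
      using this
  · have := congrArg (· % w i) (hi i)
    simpa [Nat.mod_eq_of_lt (hqr.2 i), Nat.mod_eq_of_lt (hqr'.2 i)] using this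

theorem card_weightedSimplex_one_le {w : ι → ℕ} (hw : ∀ i, w i ≠ 0) (n : ℕ) :
    #(weightedSimplex (fun _ : ι => 1) n) ≤ (∏ i, w i) * #(weightedSimplex w n) := by
  rw [← card_image_mul_add_box hw]
  refine card_le_card fun v hv => mem_image.mpr ⟨(fun i => v i / w i, fun i => v i % w i), ?_, ?_⟩
  · simp only [mem_product, Fintype.mem_piFinset, mem_range, mem_weightedSimplex hw]
    refine ⟨?_, fun i => Nat.mod_lt _ (Nat.pos_of_ne_zero (hw i))⟩
    rw [mem_weightedSimplex (fun _ => one_ne_zero)] at hv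
    exact (sum_le_sum fun i _ => (Nat.mul_div_le (v i) (w i)).trans (by simp)).trans hv
  · funext i
    exact Nat.div_add_mod (v i) (w i)

theorem mul_card_weightedSimplex_le {w : ι → ℕ} (hw : ∀ i, w i ≠ 0) (n : ℕ) :
    (∏ i, w i) * #(weightedSimplex w n) ≤ #(weightedSimplex (fun _ : ι => 1) (n + ∑ i, w i)) := by
  rw [← card_image_mul_add_box hw]
  refine card_le_card fun v hv => ?_
  obtain ⟨⟨q, r⟩, hqr, rfl⟩ := mem_image.mp hv
  simp only [mem_product, Fintype.mem_piFinset, mem_range, mem_weightedSimplex hw] at hqr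
  rw [mem_weightedSimplex (fun _ => one_ne_zero)]
  simp only [one_mul, sum_add_distrib]
  exact add_le_add hqr.1 (sum_le_sum fun i _ => (hqr.2 i).le)

theorem pow_le_factorial_mul_card_weightedSimplex {w : ι → ℕ} (hw : ∀ i, w i ≠ 0) (n : ℕ) :
    n ^ Fintype.card ι ≤ (Fintype.card ι)! * (∏ i, w i) * #(weightedSimplex w n) := by
  set d := Fintype.card ι
  calc n ^ d ≤ (n + 1) ^ d := Nat.pow_le_pow_left n.le_succ d
    _ ≤ (n + d).descFactorial d := by
      simpa [Nat.add_right_comm n d] using Nat.pow_sub_le_descFactorial (n + d) d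
    _ = d ! * #(weightedSimplex (fun _ : ι => 1) n) :=
      (factorial_mul_card_weightedSimplex_one n).symm
    _ ≤ d ! * (∏ i, w i) * #(weightedSimplex w n) := by
      rw [mul_assoc]; exact Nat.mul_le_mul_left _ (card_weightedSimplex_one_le hw n)

theorem factorial_mul_card_weightedSimplex_le_pow {w : ι → ℕ} (hw : ∀ i, w i ≠ 0) (n : ℕ) :
    (Fintype.card ι)! * (∏ i, w i) * #(weightedSimplex w n) ≤
      (n + ∑ i, w i + Fintype.card ι) ^ Fintype.card ι := by
  set d := Fintype.card ι
  calc d ! * (∏ i, w i) * #(weightedSimplex w n)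
      ≤ d ! * #(weightedSimplex (fun _ : ι => 1) (n + ∑ i, w i)) := by
        rw [mul_assoc]; exact Nat.mul_le_mul_left _ (mul_card_weightedSimplex_le hw n)
    _ = (n + ∑ i, w i + d).descFactorial d := factorial_mul_card_weightedSimplex_one _
    _ ≤ (n + ∑ i, w i + d) ^ d := Nat.descFactorial_le_pow _ d

theorem prod_mul_card_weightedSlice_eq (e : Option ι ≃ κ) {w : κ → ℕ} (hw : ∀ j, w j ≠ 0)
    (he : w (e none) = 1) (n : ℕ) :
    (∏ j, w j) * #(weightedSlice w n) =
      (∏ i, w (e (some i))) * #(weightedSimplex (fun i => w (e (some i))) n) := by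
  rw [card_weightedSlice_eq_card_weightedSimplex e hw he, ← e.prod_comp, Fintype.prod_option, he,
    one_mul]

theorem pow_le_factorial_mul_card_weightedSlice (e : Option ι ≃ κ) {w : κ → ℕ}
    (hw : ∀ j, w j ≠ 0) (he : w (e none) = 1) (n : ℕ) :
    n ^ Fintype.card ι ≤ (Fintype.card ι)! * (∏ j, w j) * #(weightedSlice w n) := by
  rw [mul_assoc, prod_mul_card_weightedSlice_eq e hw he, ← mul_assoc]
  exact pow_le_factorial_mul_card_weightedSimplex (fun i => hw _) n

theorem factorial_mul_card_weightedSlice_le_pow (e : Option ι ≃ κ) {w : κ → ℕ}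
    (hw : ∀ j, w j ≠ 0) (he : w (e none) = 1) (n : ℕ) :
    (Fintype.card ι)! * (∏ j, w j) * #(weightedSlice w n) ≤
      (n + ∑ j, w j + Fintype.card ι) ^ Fintype.card ι := by
  rw [mul_assoc, prod_mul_card_weightedSlice_eq e hw he, ← mul_assoc]
  refine (factorial_mul_card_weightedSimplex_le_pow (fun i => hw _) n).trans ?_
  gcongr
  rw [← e.sum_comp, Fintype.sum_option]
  exact Nat.le_add_left _ _

end LatticePoints

theorem tendsto_cast_div_pow_of_sandwich {a b d : ℕ} {f : ℕ → ℕ}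
    (hf : ∀ᶠ n in atTop, (n - a) ^ d ≤ f n ∧ f n ≤ (n + b) ^ d) :
    Tendsto (fun n => (f n : ℝ) / n ^ d) atTop (𝓝 1) := by
  have hlim (c : ℝ) : Tendsto (fun n : ℕ => ((n + c) / n) ^ d) atTop (𝓝 1) := by
    have h := ((tendsto_const_div_atTop_nhds_zero_nat c).const_add 1).pow d
    rw [add_zero, one_pow] at h
    refine h.congr' ?_
    filter_upwards [eventually_ne_atTop 0] with n hn
    rw [add_div, div_self (Nat.cast_ne_zero.mpr hn)]
  refine tendsto_of_tendsto_of_tendsto_of_le_of_le' (hlim (-a)) (hlim b) ?_ ?_ <;>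
    filter_upwards [hf, eventually_ge_atTop a, eventually_gt_atTop 0] with n hfn ha hn <;>
    rw [div_pow, div_le_div_iff_of_pos_right (by positivity)]
  · rw [← sub_eq_add_neg, ← Nat.cast_sub ha]
    exact_mod_cast hfn.1
  · exact_mod_cast hfn.2

section TailSums

variable {k : ℕ}

def tailSum (y : Fin k → ℕ) (i : ℕ) : ℕ := ∑ j ∈ univ.filter fun j : Fin k => i ≤ j, y j

theorem tailSum_antitone (y : Fin k → ℕ) : Antitone (tailSum y) := fun _ _ h =>
  sum_le_sum_of_subset <| monotone_filter_right _ fun _ _ hj => h.trans hj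

theorem tailSum_of_le {y : Fin k → ℕ} {i : ℕ} (hi : k ≤ i) : tailSum y i = 0 :=
  sum_eq_zero fun j hj => absurd ((mem_filter.mp hj).2.trans_lt j.isLt) (not_lt.mpr hi)

theorem tailSum_eq_add {y : Fin k → ℕ} {i : ℕ} (hi : i < k) :
    tailSum y i = y ⟨i, hi⟩ + tailSum y (i + 1) := by
  have hsplit : (univ.filter fun j : Fin k => i ≤ j) =
      insert ⟨i, hi⟩ (univ.filter fun j : Fin k => i + 1 ≤ j) := by
    ext j
    simp only [mem_filter, mem_univ, true_and, mem_insert, Fin.ext_iff]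
    omega
  rw [tailSum, hsplit, sum_insert (by simp)]
  rfl

theorem sum_range_tailSum (y : Fin k → ℕ) :
    ∑ i ∈ range k, tailSum y i = ∑ j : Fin k, ((j : ℕ) + 1) * y j := by
  simp only [tailSum, sum_filter]
  rw [sum_comm]
  refine sum_congr rfl fun j _ => ?_
  rw [← sum_filter, sum_const, smul_eq_mul, ← card_range ((j : ℕ) + 1)]
  congr 2
  ext i
  simp only [mem_filter, mem_range]
  omega

theorem eq_of_tailSum_eq {y y' : Fin k → ℕ} (h : ∀ i < k, tailSum y i = tailSum y' i) :
    y = y' := by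
  funext ⟨j, hj⟩
  have hj' := h j hj
  rw [tailSum_eq_add hj, tailSum_eq_add hj] at hj'
  rcases lt_or_ge (j + 1) k with hlt | hge
  · have := h (j + 1) hlt
    omega
  · rw [tailSum_of_le hge, tailSum_of_le hge] at hj'
    omega

-- `f` is read as vanishing from `k` on, so that `tailSum` recovers it on `[0, k)`.
variable (k) in
def consecutiveDiffs (f : ℕ → ℕ) (j : Fin k) : ℕ := f j - if (j : ℕ) + 1 < k then f (j + 1) else 0

theorem tailSum_consecutiveDiffs {f : ℕ → ℕ} (hf : Antitone f) {i : ℕ} (hi : i < k) :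
    tailSum (consecutiveDiffs k f) i = f i := by
  obtain hle := hi.le
  induction hle using Nat.decreasingInduction with
  | self => exact absurd hi (lt_irrefl k)
  | of_succ i hik ih =>
    rw [tailSum_eq_add hik, consecutiveDiffs, Fin.val_mk]
    split_ifs with h
    · rw [ih h]
      have := hf (Nat.le_add_right i 1)
      omega
    · rw [tailSum_of_le (not_lt.mp h)]
      omega

end TailSums

namespace YoungDiagram

variable {μ ν : YoungDiagram} {k : ℕ}

theorem mem_iff_of_rowLen_le (hμ : μ.rowLen k ≤ k) {i j : ℕ} :
    (i, j) ∈ μ ↔ (i < k ∧ j < μ.rowLen i) ∨ (j < k ∧ i < μ.colLen j) := by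
  rw [← mem_iff_lt_rowLen, ← mem_iff_lt_colLen]
  refine ⟨fun h => ?_, by rintro (⟨-, h⟩ | ⟨-, h⟩) <;> exact h⟩
  by_cases hi : i < k
  · exact .inl ⟨hi, h⟩
  refine .inr ⟨?_, h⟩
  by_contra hj
  have hkk : (k, k) ∈ μ := μ.up_left_mem (not_lt.mp hi) (not_lt.mp hj) h
  exact hμ.not_gt (mem_iff_lt_rowLen.mp hkk)

theorem ext_of_rowLen_le (hμ : μ.rowLen k ≤ k) (hν : ν.rowLen k ≤ k)
    (hrow : ∀ i < k, μ.rowLen i = ν.rowLen i)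
    (hcol : ∀ j < k, μ.colLen j - k = ν.colLen j - k) : μ = ν := by
  refine SetLike.ext fun ⟨i, j⟩ => ?_
  by_cases hi : i < k
  · rw [mem_iff_lt_rowLen, mem_iff_lt_rowLen, hrow i hi]
  rw [mem_iff_of_rowLen_le hμ, mem_iff_of_rowLen_le hν]
  refine or_congr (by simp [hi]) (and_congr_right fun hj => ?_)
  have := hcol j hj
  omega

theorem card_eq_of_rowLen_le (hμ : μ.rowLen k ≤ k) :
    μ.card = ∑ i ∈ range k, μ.rowLen i + ∑ j ∈ range k, (μ.colLen j - k) := by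
  rw [YoungDiagram.card, ← card_filter_add_card_filter_not (p := fun c : ℕ × ℕ => c.1 < k)]
  congr 1
  · rw [card_eq_sum_card_fiberwise (f := Prod.fst) (t := range k)
      fun c hc => mem_range.mpr (mem_filter.mp hc).2]
    refine sum_congr rfl fun i hi => ?_
    rw [rowLen_eq_card, row, filter_filter]
    exact congrArg card (filter_congr fun c _ => by have := mem_range.mp hi; omega)
  · have hcol : ∀ c ∈ {c ∈ μ.cells | ¬c.1 < k}, c.2 ∈ range k := by
      rintro ⟨i, j⟩ hc
      obtain ⟨hij, hi⟩ := mem_filter.mp hc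
      rcases (mem_iff_of_rowLen_le hμ).mp hij with h | h
      · exact absurd h.1 hi
      · exact mem_range.mpr h.1
    rw [card_eq_sum_card_fiberwise hcol]
    refine sum_congr rfl fun j _ => ?_
    have hfib : {c ∈ {c ∈ μ.cells | ¬c.1 < k} | c.2 = j} = Ico k (μ.colLen j) ×ˢ {j} := by
      ext ⟨i', j'⟩
      simp only [mem_filter, mem_cells, mem_product, mem_Ico, mem_singleton]
      constructor
      · rintro ⟨⟨h, hi⟩, rfl⟩
        exact ⟨⟨not_lt.mp hi, mem_iff_lt_colLen.mp h⟩, rfl⟩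
      · rintro ⟨⟨hi, h⟩, rfl⟩
        exact ⟨⟨mem_iff_lt_colLen.mpr h, not_lt.mpr hi⟩, rfl⟩
    rw [hfib, card_product, Nat.card_Ico, card_singleton, mul_one]

def armDiagram (y : Fin k → ℕ) : YoungDiagram where
  cells := {c ∈ range k ×ˢ range (k + tailSum y 0) | c.2 < k + tailSum y c.1}
  isLowerSet := by
    rintro ⟨i, j⟩ ⟨i', j'⟩ hle h
    obtain ⟨hi, hj⟩ := Prod.mk_le_mk.mp hle
    simp only [coe_filter, mem_product, mem_range, Set.mem_ofPred_eq] at h ⊢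
    have := tailSum_antitone y hi
    have := tailSum_antitone y (Nat.zero_le i')
    omega

theorem mem_armDiagram {y : Fin k → ℕ} {i j : ℕ} :
    (i, j) ∈ armDiagram y ↔ i < k ∧ j < k + tailSum y i := by
  rw [← mem_cells, armDiagram, mem_filter, mem_product, mem_range, mem_range]
  dsimp only
  have := tailSum_antitone y (Nat.zero_le i)
  omega

def hookDiagram (y z : Fin k → ℕ) : YoungDiagram := armDiagram y ⊔ (armDiagram z).transpose

variable {y z y' z' : Fin k → ℕ}

theorem mem_hookDiagram {i j : ℕ} :
    (i, j) ∈ hookDiagram y z ↔ (i < k ∧ j < k + tailSum y i) ∨ (j < k ∧ i < k + tailSum z j) := by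
  rw [hookDiagram, YoungDiagram.mem_sup, mem_transpose, Prod.swap_prod_mk, mem_armDiagram,
    mem_armDiagram]

theorem rowLen_hookDiagram {i : ℕ} (hi : i < k) : (hookDiagram y z).rowLen i = k + tailSum y i :=
  eq_of_forall_lt_iff fun j => by rw [← mem_iff_lt_rowLen, mem_hookDiagram]; omega

theorem colLen_hookDiagram {j : ℕ} (hj : j < k) : (hookDiagram y z).colLen j = k + tailSum z j :=
  eq_of_forall_lt_iff fun i => by rw [← mem_iff_lt_colLen, mem_hookDiagram]; omega

theorem rowLen_hookDiagram_le : (hookDiagram y z).rowLen k ≤ k := by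
  by_contra h
  have hkk := mem_hookDiagram.mp (mem_iff_lt_rowLen.mpr (not_le.mp h))
  omega

theorem card_hookDiagram :
    (hookDiagram y z).card = k * k + (∑ i : Fin k, (i + 1) * y i + ∑ j : Fin k, (j + 1) * z j) := by
  have hrow : ∑ i ∈ range k, (hookDiagram y z).rowLen i = ∑ i ∈ range k, (k + tailSum y i) :=
    sum_congr rfl fun i hi => rowLen_hookDiagram (mem_range.mp hi)
  have hcol : ∑ j ∈ range k, ((hookDiagram y z).colLen j - k) = ∑ j ∈ range k, tailSum z j :=
    sum_congr rfl fun j hj => by rw [colLen_hookDiagram (mem_range.mp hj), Nat.add_sub_cancel_left]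
  rw [card_eq_of_rowLen_le rowLen_hookDiagram_le, hrow, hcol, sum_add_distrib, sum_const,
    card_range, smul_eq_mul, sum_range_tailSum, sum_range_tailSum, add_assoc]

theorem hookDiagram_injective (h : hookDiagram y z = hookDiagram y' z') : y = y' ∧ z = z' := by
  refine ⟨eq_of_tailSum_eq fun i hi => ?_, eq_of_tailSum_eq fun j hj => ?_⟩
  · have := congrArg (·.rowLen i) h
    simp only [rowLen_hookDiagram hi] at this
    omega
  · have := congrArg (·.colLen j) h
    simp only [colLen_hookDiagram hj] at this
    omega

end YoungDiagram

section HookCount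

open YoungDiagram

variable {k : ℕ}

def hookWeight (k : ℕ) : Fin k ⊕ Fin k → ℕ := Sum.elim (fun i => i + 1) (fun j => j + 1)

theorem hookWeight_ne_zero : ∀ x, hookWeight k x ≠ 0 := by
  rintro (i | j) <;> simp [hookWeight]

theorem prod_hookWeight : ∏ x, hookWeight k x = k ! * k ! := by
  have hfac : ∏ i : Fin k, ((i : ℕ) + 1) = k ! :=
    (Fin.prod_univ_eq_prod_range (· + 1) k).trans (prod_range_add_one_eq_factorial k)
  rw [Fintype.prod_sum_type]
  exact congrArg₂ (· * ·) hfac hfac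

theorem sum_hookWeight_mul (v : Fin k ⊕ Fin k → ℕ) :
    ∑ x, hookWeight k x * v x =
      ∑ i : Fin k, (i + 1) * v (.inl i) + ∑ j : Fin k, (j + 1) * v (.inr j) :=
  Fintype.sum_sum_type _

def hookCoords (k : ℕ) (μ : YoungDiagram) : Fin k ⊕ Fin k → ℕ :=
  Sum.elim (consecutiveDiffs k μ.rowLen) (consecutiveDiffs k (μ.colLen · - k))

theorem tailSum_hookCoords_inl (μ : YoungDiagram) {i : ℕ} (hi : i < k) :
    tailSum (fun i => hookCoords k μ (.inl i)) i = μ.rowLen i :=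
  tailSum_consecutiveDiffs (fun a b h => μ.rowLen_anti a b h) hi

theorem tailSum_hookCoords_inr (μ : YoungDiagram) {j : ℕ} (hj : j < k) :
    tailSum (fun j => hookCoords k μ (.inr j)) j = μ.colLen j - k :=
  tailSum_consecutiveDiffs (fun a b h => Nat.sub_le_sub_right (μ.colLen_anti a b h) k) hj

theorem hookCoords_mem_weightedSlice {n : ℕ} {μ : YoungDiagram} (hμ : μ ∈ hook k k n) :
    hookCoords k μ ∈ weightedSlice (hookWeight k) n := by
  rw [mem_weightedSlice hookWeight_ne_zero, sum_hookWeight_mul, ← hμ.1,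
    card_eq_of_rowLen_le hμ.2, ← sum_range_tailSum, ← sum_range_tailSum]
  congr 1
  · exact sum_congr rfl fun i hi => tailSum_hookCoords_inl μ (mem_range.mp hi)
  · exact sum_congr rfl fun j hj => tailSum_hookCoords_inr μ (mem_range.mp hj)

theorem injOn_hookCoords (n : ℕ) : Set.InjOn (hookCoords k) (hook k k n) := fun μ hμ ν hν h =>
  ext_of_rowLen_le hμ.2 hν.2
    (fun i hi => by rw [← tailSum_hookCoords_inl μ hi, ← tailSum_hookCoords_inl ν hi, h])
    (fun j hj => by rw [← tailSum_hookCoords_inr μ hj, ← tailSum_hookCoords_inr ν hj, h])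

theorem finite_hook (n : ℕ) : (hook k k n).Finite :=
  Set.Finite.of_injOn (fun _ hμ => hookCoords_mem_weightedSlice hμ) (injOn_hookCoords n)
    (weightedSlice _ n).finite_toSet

theorem ncard_hook_le (n : ℕ) : (hook k k n).ncard ≤ #(weightedSlice (hookWeight k) n) := by
  rw [← Set.ncard_coe_finset]
  exact Set.ncard_le_ncard_of_injOn _ (fun _ hμ => hookCoords_mem_weightedSlice hμ)
    (injOn_hookCoords n) (finite_toSet _)

theorem card_weightedSlice_le_ncard_hook {n : ℕ} (hn : k * k ≤ n) :
    #(weightedSlice (hookWeight k) (n - k * k)) ≤ (hook k k n).ncard := by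
  rw [← Set.ncard_coe_finset]
  refine Set.ncard_le_ncard_of_injOn
    (fun v => hookDiagram (fun i => v (.inl i)) (fun j => v (.inr j)))
    (fun v hv => ⟨?_, rowLen_hookDiagram_le⟩) (fun v _ v' _ h => ?_) (finite_hook n)
  · rw [mem_coe, mem_weightedSlice hookWeight_ne_zero, sum_hookWeight_mul] at hv
    rw [card_hookDiagram, hv]
    omega
  · obtain ⟨hl, hr⟩ := hookDiagram_injective h
    funext x
    rcases x with i | j
    · exact congrFun hl i
    · exact congrFun hr j

theorem ncard_hook_bounds (hk : 1 ≤ k) {n : ℕ} (hn : k * k ≤ n) :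
    (n - k * k) ^ (2 * k - 1) ≤ (2 * k - 1)! * (k ! * k !) * (hook k k n).ncard ∧
      (2 * k - 1)! * (k ! * k !) * (hook k k n).ncard ≤
        (n + (∑ x, hookWeight k x + (2 * k - 1))) ^ (2 * k - 1) := by
  let e := Equiv.optionSubtypeNe (Sum.inl ⟨0, hk⟩ : Fin k ⊕ Fin k)
  have he : hookWeight k (e none) = 1 := rfl
  have hd : Fintype.card {x // x ≠ (Sum.inl ⟨0, hk⟩ : Fin k ⊕ Fin k)} = 2 * k - 1 := by
    have := Fintype.card_congr e
    rw [Fintype.card_option, Fintype.card_sum, Fintype.card_fin] at this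
    omega
  rw [← hd, ← prod_hookWeight, ← add_assoc]
  constructor
  · refine (pow_le_factorial_mul_card_weightedSlice e hookWeight_ne_zero he _).trans ?_
    gcongr
    exact card_weightedSlice_le_ncard_hook hn
  · refine le_trans ?_ (factorial_mul_card_weightedSlice_le_pow e hookWeight_ne_zero he n)
    gcongr
    exact ncard_hook_le n

end HookCount

/-- Fix an integer `k ≥ 1`.  Then
`|H(k,k;n)| · k!·k!·(2k−1)! / n^{2k−1} → 1` as `n → ∞`; that is, the number of partitions
of `n` in the `(k,k)`-hook is asymptotically `n^{2k−1} / (k!·k!·(2k−1)!)`. -/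
theorem stmt19 (k : ℕ) (hk : 1 ≤ k) :
    Filter.Tendsto
      (fun n : ℕ =>
        ((hook k k n).ncard : ℝ) *
            ((Nat.factorial k : ℝ) * (Nat.factorial k : ℝ) *
              (Nat.factorial (2 * k - 1) : ℝ)) /
          (n : ℝ) ^ (2 * k - 1))
      Filter.atTop (nhds 1) := by
  have hbounds := eventually_atTop.mpr ⟨k * k, fun n hn => ncard_hook_bounds hk hn⟩
  refine (tendsto_cast_div_pow_of_sandwich hbounds).congr fun n => ?_
  push_cast
  ring
end
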